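/- arXiv:2306.02159 — 5 statements merged into one kernel-verified Lean document; each statement's English description precedes it below -/
import Mathlib

section
/- Let U be uniformly distributed on the open ℓ1 unit ball B₁^d = {u ∈ ℝ^d : ‖u‖₁ < 1}. Then for every real β ≥ 2, E[‖U‖^β] ≤ d^{β/2} · Γ(β+1) · Γ(d+1) / Γ(d+β+1), where ‖·‖ is the Euclidean norm and Γ is the Gamma function. -/
open MeasureTheory ProbabilityTheory Real
open scoped RealInnerProductSpace ENNReal NNReal BigOperators

noncomputable section

abbrev Euc (d : ℕ) := EuclideanSpace ℝ (Fin d)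

def holderIdx (β : ℝ) : ℕ := ⌈β⌉₊ - 1

def HolderClass (d : ℕ) (β L : ℝ) (f : Euc d → ℝ) : Prop :=
  ContDiff ℝ (holderIdx β : ℕ∞) f ∧
    ∀ x z : Euc d,
      ‖iteratedFDeriv ℝ (holderIdx β) f x - iteratedFDeriv ℝ (holderIdx β) f z‖ ≤
        L * ‖x - z‖ ^ (β - (holderIdx β : ℝ))

def uniformSeg : Measure ℝ :=
  (volume (Set.Icc (-1:ℝ) 1))⁻¹ • volume.restrict (Set.Icc (-1:ℝ) 1)

def sphereL2 (d : ℕ) : Set (Euc d) := Metric.sphere (0 : Euc d) 1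

def uniformSphereL2 (d : ℕ) : Measure (Euc d) :=
  (Measure.hausdorffMeasure ((d:ℝ) - 1) (sphereL2 d))⁻¹ •
    (Measure.hausdorffMeasure ((d:ℝ) - 1)).restrict (sphereL2 d)

def uniformBallL2 (d : ℕ) : Measure (Euc d) :=
  (volume (Metric.closedBall (0 : Euc d) 1))⁻¹ •
    volume.restrict (Metric.closedBall (0 : Euc d) 1)

def l1Ball (d : ℕ) : Set (Euc d) := {u | ∑ i, |u i| < 1}

def l1Sphere (d : ℕ) : Set (Euc d) := {u | ∑ i, |u i| = 1}

def uniformBallL1 (d : ℕ) : Measure (Euc d) :=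
  (volume (l1Ball d))⁻¹ • volume.restrict (l1Ball d)

def uniformSphereL1 (d : ℕ) : Measure (Euc d) :=
  (Measure.hausdorffMeasure ((d:ℝ) - 1) (l1Sphere d))⁻¹ •
    (Measure.hausdorffMeasure ((d:ℝ) - 1)).restrict (l1Sphere d)

def signVec (d : ℕ) (x : Euc d) : Euc d :=
  (EuclideanSpace.equiv (Fin d) ℝ).symm (fun i => if x i < 0 then (-1:ℝ) else 1)

def KernelValid (β : ℝ) (K : ℝ → ℝ) : Prop :=
  Measurable K ∧ (∃ C, ∀ u ∈ Set.Icc (-1:ℝ) 1, |K u| ≤ C) ∧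
    (∫ u in Set.Icc (-1:ℝ) 1, K u) = 0 ∧
    (∫ u in Set.Icc (-1:ℝ) 1, u * K u) = 1 ∧
    (∀ j : ℕ, 2 ≤ j → j ≤ holderIdx β → (∫ u in Set.Icc (-1:ℝ) 1, u ^ j * K u) = 0) ∧
    IntegrableOn (fun u => |u| ^ β * |K u|) (Set.Icc (-1:ℝ) 1)

section auxiliary

open Set

lemma measN (d : ℕ) : Measurable (fun x : Fin d → ℝ => ∑ j, |x j|) :=
  Finset.measurable_sum _ (fun j _ => (measurable_pi_apply j).abs)

lemma scale_aux {d : ℕ} {β : ℝ} (f : (Fin d → ℝ) → ℝ≥0∞)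
    (hf : Measurable f)
    (hom : ∀ r : ℝ, 0 < r → ∀ x, f (r • x) = ENNReal.ofReal (r ^ β) * f x)
    {r : ℝ} (hr : 0 < r) :
    (∫⁻ x in {y : Fin d → ℝ | ∑ j, |y j| < r}, f x) =
      ENNReal.ofReal (r ^ ((d : ℝ) + β)) * ∫⁻ x in {y : Fin d → ℝ | ∑ j, |y j| < 1}, f x := by
  have hN := measN d
  have hS : ∀ c : ℝ, MeasurableSet {y : Fin d → ℝ | ∑ j, |y j| < c} := fun c =>
    measurableSet_lt hN measurable_const
  have hrd : (0:ℝ) < r ^ d := pow_pos hr d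
  -- indicator function
  set g : (Fin d → ℝ) → ℝ≥0∞ := ({y : Fin d → ℝ | ∑ j, |y j| < r}).indicator f with hg
  have hgm : Measurable g := hf.indicator (hS r)
  have key : ∫⁻ y, g y ∂(Measure.map (fun x : Fin d → ℝ => r • x) volume) =
      ∫⁻ x, g (r • x) := lintegral_map hgm (measurable_const_smul r)
  rw [Measure.map_addHaar_smul volume (ne_of_gt hr), lintegral_smul_measure] at key
  have hfr : Module.finrank ℝ (Fin d → ℝ) = d := by
    simp [Module.finrank_fintype_fun_eq_card]
  rw [hfr] at key
  have hptw : ∀ x : Fin d → ℝ, g (r • x) =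
      ENNReal.ofReal (r ^ β) * ({y : Fin d → ℝ | ∑ j, |y j| < 1}).indicator f x := by
    intro x
    have hsum : (∑ j, |(r • x) j|) = r * ∑ j, |x j| := by
      rw [Finset.mul_sum]
      refine Finset.sum_congr rfl fun j _ => ?_
      simp [abs_mul, abs_of_pos hr]
    by_cases hx : (∑ j, |x j|) < 1
    · have hmem : (r • x) ∈ {y : Fin d → ℝ | ∑ j, |y j| < r} := by
        simp only [Set.mem_setOf_eq, hsum]
        calc r * ∑ j, |x j| < r * 1 := by
              exact (mul_lt_mul_iff_right₀ hr).mpr hx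
          _ = r := mul_one r
      rw [hg, Set.indicator_of_mem hmem, Set.indicator_of_mem (show x ∈ {y : Fin d → ℝ | ∑ j, |y j| < 1} from hx) f, hom r hr]
    · have hmem : (r • x) ∉ {y : Fin d → ℝ | ∑ j, |y j| < r} := by
        simp only [Set.mem_setOf_eq, hsum, not_lt]
        nlinarith [not_lt.mp hx]
      rw [hg, Set.indicator_of_notMem hmem, Set.indicator_of_notMem (show x ∉ {y : Fin d → ℝ | ∑ j, |y j| < 1} from hx) f, mul_zero]
  rw [funext hptw] at key
  rw [lintegral_const_mul _ (hf.indicator (hS 1))] at key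
  -- key : ofReal |(r^d)⁻¹| * ∫⁻ g = ofReal (r^β) * ∫⁻ indicator
  have hinv : ENNReal.ofReal (r ^ d) * ENNReal.ofReal |(r ^ d)⁻¹| = 1 := by
    rw [abs_of_pos (inv_pos.mpr hrd), ← ENNReal.ofReal_mul hrd.le,
      mul_inv_cancel₀ (ne_of_gt hrd), ENNReal.ofReal_one]
  have := congrArg (fun t => ENNReal.ofReal (r ^ d) * t) key
  simp only [smul_eq_mul, ← mul_assoc, hinv, one_mul] at this
  rw [← lintegral_indicator (hS r), ← lintegral_indicator (hS 1), ← hg, this,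
    ← ENNReal.ofReal_mul hrd.le]
  congr 2
  rw [rpow_add hr, rpow_natCast]

lemma exp_tail (a : ℝ) :
    ENNReal.ofReal (Real.exp (-a)) = ∫⁻ r in Ioi a, ENNReal.ofReal (Real.exp (-r)) := by
  rw [← ofReal_integral_eq_lintegral_ofReal
    (by simpa using (exp_neg_integrableOn_Ioi a one_pos).integrable)
    (Filter.Eventually.of_forall fun x => (Real.exp_pos _).le), integral_exp_neg_Ioi]

lemma key_aux {d : ℕ} {β : ℝ} (f : (Fin d → ℝ) → ℝ≥0∞)
    (hf : Measurable f)
    (hom : ∀ r : ℝ, 0 < r → ∀ x, f (r • x) = ENNReal.ofReal (r ^ β) * f x)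
    (hβ : 0 < (d : ℝ) + β + 1) :
    (∫⁻ x in {y : Fin d → ℝ | ∑ j, |y j| < 1}, f x) *
        ENNReal.ofReal (Real.Gamma ((d : ℝ) + β + 1)) =
      ∫⁻ x : Fin d → ℝ, f x * ENNReal.ofReal (Real.exp (-∑ j, |x j|)) := by
  have hN := measN d
  have hS : ∀ c : ℝ, MeasurableSet {y : Fin d → ℝ | ∑ j, |y j| < c} := fun c =>
    measurableSet_lt hN measurable_const
  set I₁ := ∫⁻ x in {y : Fin d → ℝ | ∑ j, |y j| < 1}, f x with hI₁
  set U : Set ((Fin d → ℝ) × ℝ) := {q | (∑ j, |q.1 j|) < q.2} with hU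
  have hUm : MeasurableSet U := measurableSet_lt (hN.comp measurable_fst) measurable_snd
  set F : (Fin d → ℝ) × ℝ → ℝ≥0∞ :=
    U.indicator (fun q => f q.1 * ENNReal.ofReal (Real.exp (-q.2))) with hF
  have hFm : Measurable F :=
    ((hf.comp measurable_fst).mul
      ((measurable_snd.neg.exp).ennreal_ofReal)).indicator hUm
  have step2 : (∫⁻ x : Fin d → ℝ, f x * ENNReal.ofReal (Real.exp (-∑ j, |x j|))) =
      ∫⁻ x : Fin d → ℝ, ∫⁻ r : ℝ, F (x, r) := by
    refine lintegral_congr fun x => ?_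
    have : ∀ r : ℝ, F (x, r) =
        (Ioi (∑ j, |x j|)).indicator (fun r => f x * ENNReal.ofReal (Real.exp (-r))) r := by
      intro r
      simp [hF, Set.indicator_apply, hU, Set.mem_Ioi]
    have hme : Measurable fun r : ℝ => ENNReal.ofReal (Real.exp (-r)) := by fun_prop
    rw [funext this, lintegral_indicator measurableSet_Ioi,
      lintegral_const_mul _ hme, ← exp_tail]
  have step3 : (∫⁻ x : Fin d → ℝ, ∫⁻ r : ℝ, F (x, r)) =
      ∫⁻ r : ℝ, ∫⁻ x : Fin d → ℝ, F (x, r) :=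
    lintegral_lintegral_swap hFm.aemeasurable
  have step4 : ∀ r : ℝ, (∫⁻ x : Fin d → ℝ, F (x, r)) =
      (Ioi (0:ℝ)).indicator
        (fun r => ENNReal.ofReal (Real.exp (-r) * r ^ ((d : ℝ) + β))) r * I₁ := by
    intro r
    have hFr : ∀ x : Fin d → ℝ, F (x, r) =
        ({y : Fin d → ℝ | ∑ j, |y j| < r}).indicator
          (fun y => f y * ENNReal.ofReal (Real.exp (-r))) x := by
      intro x; simp [hF, Set.indicator_apply, hU]
    rw [funext hFr, lintegral_indicator (hS r),
      lintegral_mul_const _ hf]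
    by_cases hr : 0 < r
    · rw [scale_aux f hf hom hr, Set.indicator_of_mem (Set.mem_Ioi.mpr hr),
        ENNReal.ofReal_mul (Real.exp_pos _).le]
      ring
    · have hempty : {y : Fin d → ℝ | ∑ j, |y j| < r} = ∅ := by
        ext y
        simp only [Set.mem_setOf_eq, Set.mem_empty_iff_false, iff_false, not_lt]
        exact le_trans (not_lt.mp hr) (Finset.sum_nonneg fun j _ => abs_nonneg _)
      rw [Set.indicator_of_notMem (by simpa using hr), hempty]
      simp
  have step5 : (∫⁻ r : ℝ, (Ioi (0:ℝ)).indicator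
        (fun r => ENNReal.ofReal (Real.exp (-r) * r ^ ((d : ℝ) + β))) r * I₁) =
      ENNReal.ofReal (Real.Gamma ((d : ℝ) + β + 1)) * I₁ := by
    have hme : Measurable fun r : ℝ => ENNReal.ofReal (Real.exp (-r) * r ^ ((d : ℝ) + β)) := by
      fun_prop
    rw [lintegral_mul_const _ (hme.indicator measurableSet_Ioi),
      lintegral_indicator measurableSet_Ioi]
    congr 1
    rw [← ofReal_integral_eq_lintegral_ofReal]
    · rw [Real.Gamma_eq_integral hβ]
      congr 1
      refine setIntegral_congr_fun measurableSet_Ioi fun x hx => ?_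
      rw [add_sub_cancel_right]
    · have := Real.GammaIntegral_convergent hβ
      rw [show (d : ℝ) + β + 1 - 1 = (d : ℝ) + β by ring] at this
      exact this
    · filter_upwards [ae_restrict_mem measurableSet_Ioi] with x hx
      exact mul_nonneg (Real.exp_pos _).le (Real.rpow_nonneg (le_of_lt hx) _)
  rw [step2, step3, funext step4, step5, mul_comm]

lemma integrable_comp_abs' {f : ℝ → ℝ} (hf : IntegrableOn f (Ioi 0)) :
    Integrable (fun x => f |x|) := by
  have eq : IntegrableOn (fun x => f |x|) (Ioi 0) :=
    hf.congr_fun (fun x hx => by rw [abs_of_pos hx]) measurableSet_Ioi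
  have int_Iic : IntegrableOn (fun x => f |x|) (Iic 0) := by
    rw [← Measure.map_neg_eq_self (volume : Measure ℝ)]
    have m : MeasurableEmbedding fun x : ℝ => -x := (Homeomorph.neg ℝ).measurableEmbedding
    rw [m.integrableOn_map_iff]
    simp_rw [Function.comp_def, abs_neg, neg_preimage, neg_Iic, neg_zero]
    exact (integrableOn_Ici_iff_integrableOn_Ioi).mpr eq
  have h := int_Iic.union eq
  rwa [Iic_union_Ioi, integrableOn_univ] at h

lemma integrableOn_rpow_exp {β : ℝ} (hβ : 0 ≤ β) :
    IntegrableOn (fun t : ℝ => t ^ β * Real.exp (-t)) (Ioi 0) := by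
  have h := Real.GammaIntegral_convergent (by linarith : (0:ℝ) < β + 1)
  rw [show β + 1 - 1 = β by ring] at h
  exact h.congr_fun (fun x _ => mul_comm _ _) measurableSet_Ioi

lemma int_rpow_exp {β : ℝ} (hβ : 0 ≤ β) :
    ∫ t : ℝ, |t| ^ β * Real.exp (-|t|) = 2 * Real.Gamma (β + 1) := by
  rw [integral_comp_abs (f := fun t : ℝ => t ^ β * Real.exp (-t)),
    Real.Gamma_eq_integral (by linarith : (0:ℝ) < β + 1)]
  rw [show β + 1 - 1 = β by ring]
  congr 1
  exact setIntegral_congr_fun measurableSet_Ioi fun x _ => mul_comm _ _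

lemma int_exp_abs : ∫ t : ℝ, Real.exp (-|t|) = 2 := by
  rw [integral_comp_abs (f := fun t : ℝ => Real.exp (-t)), integral_exp_neg_Ioi_zero, mul_one]

lemma moment_pi {d : ℕ} (i : Fin d) {β : ℝ} (hβ : 0 ≤ β) :
    (∫⁻ x : Fin d → ℝ,
        ENNReal.ofReal (|x i| ^ β) * ENNReal.ofReal (Real.exp (-∑ j, |x j|))) =
      ENNReal.ofReal (2 ^ d * Real.Gamma (β + 1)) := by
  classical
  set g : Fin d → ℝ → ℝ := fun j t => (if j = i then |t| ^ β else 1) * Real.exp (-|t|) with hg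
  have hgint : ∀ j, Integrable (g j) := by
    intro j
    by_cases hj : j = i
    · simp only [hg, hj, if_pos rfl]
      exact integrable_comp_abs' (f := fun t => t ^ β * Real.exp (-t)) (integrableOn_rpow_exp hβ)
    · simp only [hg, if_neg hj, one_mul]
      exact integrable_comp_abs' (f := fun t => Real.exp (-t))
        (by simpa using exp_neg_integrableOn_Ioi 0 one_pos)
  have hprod : ∀ x : Fin d → ℝ, |x i| ^ β * Real.exp (-∑ j, |x j|) = ∏ j, g j (x j) := by
    intro x
    have h1 : Real.exp (-∑ j, |x j|) = ∏ j, Real.exp (-|x j|) := by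
      rw [← Real.exp_sum, ← Finset.sum_neg_distrib]
    rw [hg, Finset.prod_mul_distrib, ← h1]
    simp [Finset.prod_ite_eq' Finset.univ i (fun j => |x j| ^ β)]
  have hint : Integrable (fun x : Fin d → ℝ => |x i| ^ β * Real.exp (-∑ j, |x j|)) := by
    have := Integrable.fintype_prod (𝕜 := ℝ) (f := g) hgint
    exact this.congr (Filter.Eventually.of_forall fun x => (hprod x).symm)
  have hnn : ∀ x : Fin d → ℝ, 0 ≤ |x i| ^ β * Real.exp (-∑ j, |x j|) := fun x =>
    mul_nonneg (Real.rpow_nonneg (abs_nonneg _) _) (Real.exp_pos _).le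
  calc
    (∫⁻ x : Fin d → ℝ,
        ENNReal.ofReal (|x i| ^ β) * ENNReal.ofReal (Real.exp (-∑ j, |x j|)))
      = ∫⁻ x : Fin d → ℝ, ENNReal.ofReal (|x i| ^ β * Real.exp (-∑ j, |x j|)) := by
        refine lintegral_congr fun x => ?_
        rw [ENNReal.ofReal_mul (Real.rpow_nonneg (abs_nonneg _) _)]
    _ = ENNReal.ofReal (∫ x : Fin d → ℝ, |x i| ^ β * Real.exp (-∑ j, |x j|)) := by
        rw [ofReal_integral_eq_lintegral_ofReal hint (Filter.Eventually.of_forall hnn)]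
    _ = ENNReal.ofReal (2 ^ d * Real.Gamma (β + 1)) := by
        congr 1
        rw [integral_congr_ae (Filter.Eventually.of_forall hprod),
          integral_fintype_prod_volume_eq_prod (𝕜 := ℝ) (ι := Fin d) g]
        have hval : ∀ j, (∫ t : ℝ, g j t) = if j = i then 2 * Real.Gamma (β + 1) else 2 := by
          intro j
          by_cases hj : j = i
          · simp only [hg, hj, if_pos rfl]
            exact int_rpow_exp hβ
          · simp only [hg, if_neg hj, one_mul]
            exact int_exp_abs
        rw [Finset.prod_congr rfl fun j _ => hval j]
        have hsplit : ∀ j : Fin d, (if j = i then 2 * Real.Gamma (β + 1) else 2)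
            = (if j = i then Real.Gamma (β + 1) else 1) * 2 := by
          intro j; split_ifs <;> ring
        rw [Finset.prod_congr rfl fun j _ => hsplit j, Finset.prod_mul_distrib,
          Finset.prod_ite_eq' Finset.univ i (fun _ => Real.Gamma (β + 1))]
        simp [Finset.prod_const]
        ring

lemma moment_ball_pi {d : ℕ} (i : Fin d) {β : ℝ} (hβ : 0 ≤ β) :
    (∫⁻ x in {y : Fin d → ℝ | ∑ j, |y j| < 1}, ENNReal.ofReal (|x i| ^ β)) =
      ENNReal.ofReal (2 ^ d * Real.Gamma (β + 1) / Real.Gamma ((d : ℝ) + β + 1)) := by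
  have hf : Measurable (fun x : Fin d → ℝ => ENNReal.ofReal (|x i| ^ β)) := by fun_prop
  have hom : ∀ r : ℝ, 0 < r → ∀ x : Fin d → ℝ,
      ENNReal.ofReal (|(r • x) i| ^ β) = ENNReal.ofReal (r ^ β) * ENNReal.ofReal (|x i| ^ β) := by
    intro r hr x
    have h1 : |(r • x) i| = r * |x i| := by
      simp [abs_mul, abs_of_pos hr]
    rw [h1, Real.mul_rpow hr.le (abs_nonneg _), ENNReal.ofReal_mul (Real.rpow_nonneg hr.le _)]
  have hβ1 : (0:ℝ) < (d : ℝ) + β + 1 := by positivity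
  have hΓpos : 0 < Real.Gamma ((d:ℝ) + β + 1) := Real.Gamma_pos_of_pos hβ1
  have h := key_aux (fun x : Fin d → ℝ => ENNReal.ofReal (|x i| ^ β)) hf hom hβ1
  rw [moment_pi i hβ] at h
  have hc0 : (ENNReal.ofReal (Real.Gamma ((d:ℝ) + β + 1))) ≠ 0 := by
    simp [ENNReal.ofReal_eq_zero, not_le, hΓpos]
  have hI : (∫⁻ x in {y : Fin d → ℝ | ∑ j, |y j| < 1}, ENNReal.ofReal (|x i| ^ β))
      = ENNReal.ofReal (2 ^ d * Real.Gamma (β + 1)) *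
        (ENNReal.ofReal (Real.Gamma ((d:ℝ) + β + 1)))⁻¹ := by
    rw [← h, mul_assoc, ENNReal.mul_inv_cancel hc0 ENNReal.ofReal_ne_top, mul_one]
  rw [hI, ← ENNReal.ofReal_inv_of_pos hΓpos, ← ENNReal.ofReal_mul (by positivity),
    ← div_eq_mul_inv]

lemma l1Ball_preimage (d : ℕ) :
    l1Ball d = (MeasurableEquiv.toLp 2 (Fin d → ℝ)).symm ⁻¹'
      {y : Fin d → ℝ | ∑ j, |y j| < 1} := rfl

lemma measurableSet_l1Ball (d : ℕ) : MeasurableSet (l1Ball d) := by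
  rw [l1Ball_preimage]
  exact (MeasurableEquiv.toLp 2 (Fin d → ℝ)).symm.measurable
    (measurableSet_lt (measN d) measurable_const)

lemma moment_ball_euc {d : ℕ} (i : Fin d) {β : ℝ} (hβ : 0 ≤ β) :
    (∫⁻ u in l1Ball d, ENNReal.ofReal (|u i| ^ β) ∂(volume : Measure (Euc d))) =
      ENNReal.ofReal (2 ^ d * Real.Gamma (β + 1) / Real.Gamma ((d : ℝ) + β + 1)) := by
  have hS : MeasurableSet {y : Fin d → ℝ | ∑ j, |y j| < 1} :=
    measurableSet_lt (measN d) measurable_const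
  have hg : Measurable (({y : Fin d → ℝ | ∑ j, |y j| < 1}).indicator
      (fun x : Fin d → ℝ => ENNReal.ofReal (|x i| ^ β))) := by
    exact (by fun_prop : Measurable
      (fun x : Fin d → ℝ => ENNReal.ofReal (|x i| ^ β))).indicator hS
  have hpres := EuclideanSpace.volume_preserving_symm_measurableEquiv_toLp (Fin d)
  have htrans : (∫⁻ u in l1Ball d, ENNReal.ofReal (|u i| ^ β) ∂(volume : Measure (Euc d)))
      = ∫⁻ x in {y : Fin d → ℝ | ∑ j, |y j| < 1}, ENNReal.ofReal (|x i| ^ β) := by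
    calc (∫⁻ u in l1Ball d, ENNReal.ofReal (|u i| ^ β) ∂(volume : Measure (Euc d)))
        = ∫⁻ u : Euc d, (l1Ball d).indicator
            (fun u : Euc d => ENNReal.ofReal (|u i| ^ β)) u :=
          (lintegral_indicator (measurableSet_l1Ball d) _).symm
      _ = ∫⁻ u : Euc d, ({y : Fin d → ℝ | ∑ j, |y j| < 1}).indicator
            (fun x : Fin d → ℝ => ENNReal.ofReal (|x i| ^ β))
            ((MeasurableEquiv.toLp 2 (Fin d → ℝ)).symm u) := by
          refine lintegral_congr fun u => ?_
          rw [l1Ball_preimage]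
          exact Set.indicator_comp_right (s := {y : Fin d → ℝ | ∑ j, |y j| < 1})
            (f := ⇑(MeasurableEquiv.toLp 2 (Fin d → ℝ)).symm)
            (g := fun x : Fin d → ℝ => ENNReal.ofReal (|x i| ^ β)) (x := u)
      _ = ∫⁻ x : Fin d → ℝ, ({y : Fin d → ℝ | ∑ j, |y j| < 1}).indicator
            (fun x : Fin d → ℝ => ENNReal.ofReal (|x i| ^ β)) x := hpres.lintegral_comp hg
      _ = ∫⁻ x in {y : Fin d → ℝ | ∑ j, |y j| < 1}, ENNReal.ofReal (|x i| ^ β) :=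
          lintegral_indicator hS _
  rw [htrans, moment_ball_pi i hβ]

lemma volume_l1Ball {d : ℕ} (hd : 0 < d) :
    (volume : Measure (Euc d)) (l1Ball d) =
      ENNReal.ofReal (2 ^ d / Real.Gamma ((d : ℝ) + 1)) := by
  have h := moment_ball_euc (β := 0) (⟨0, hd⟩ : Fin d) le_rfl
  simp only [Real.rpow_zero, zero_add, add_zero, Real.Gamma_one, mul_one,
    ENNReal.ofReal_one] at h
  rw [← h, setLIntegral_one]

lemma norm_rpow_le_sum {d : ℕ} (hd : 0 < d) {β : ℝ} (hβ : 2 ≤ β) (u : Euc d) :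
    ‖u‖ ^ β ≤ (d : ℝ) ^ (β / 2 - 1) * ∑ i, |u i| ^ β := by
  have hd' : (0:ℝ) < d := by exact_mod_cast hd
  set S := ∑ i, (u i) ^ 2 with hSdef
  have hS : 0 ≤ S := Finset.sum_nonneg fun i _ => sq_nonneg _
  have hnorm : ‖u‖ = S ^ (1/2 : ℝ) := by
    rw [EuclideanSpace.norm_eq,
      show (∑ i, ‖u i‖ ^ 2) = S from
        Finset.sum_congr rfl fun i _ => by rw [Real.norm_eq_abs, sq_abs]]
    exact Real.sqrt_eq_rpow S
  have h1 : ‖u‖ ^ β = S ^ (β / 2) := by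
    rw [hnorm, ← Real.rpow_mul hS, show (1/2) * β = β / 2 by ring]
  have hsq : ∀ i : Fin d, ((u i) ^ 2) ^ (β / 2 : ℝ) = |u i| ^ β := by
    intro i
    rw [← sq_abs, ← Real.rpow_natCast |u i| 2, ← Real.rpow_mul (abs_nonneg _),
      show ((2:ℕ):ℝ) * (β/2) = β by push_cast; ring]
  have hpm := Real.rpow_arith_mean_le_arith_mean_rpow Finset.univ
    (fun _ : Fin d => 1 / (d:ℝ)) (fun i => (u i) ^ 2)
    (fun i _ => by positivity)
    (by
      rw [Finset.sum_const, Finset.card_univ, Fintype.card_fin, nsmul_eq_mul]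
      field_simp)
    (fun i _ => sq_nonneg _) (by linarith : (1:ℝ) ≤ β / 2)
  have e2 : (∑ i, 1 / (d:ℝ) * (u i) ^ 2) = 1 / (d:ℝ) * S := by
    rw [Finset.mul_sum]
  rw [e2, Real.mul_rpow (by positivity) hS] at hpm
  have e3 : (∑ i, 1 / (d:ℝ) * ((u i) ^ 2) ^ (β/2 : ℝ)) = 1 / (d:ℝ) * ∑ i, |u i| ^ β := by
    rw [Finset.mul_sum]
    exact Finset.sum_congr rfl fun i _ => by rw [hsq i]
  rw [e3] at hpm
  have e1 : S ^ (β/2 : ℝ) = (d:ℝ) ^ (β/2 : ℝ) * ((1/(d:ℝ)) ^ (β/2 : ℝ) * S ^ (β/2 : ℝ)) := by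
    rw [← mul_assoc, ← Real.mul_rpow hd'.le (by positivity), mul_one_div_cancel (ne_of_gt hd'),
      Real.one_rpow, one_mul]
  calc ‖u‖ ^ β = S ^ (β/2 : ℝ) := h1
    _ = (d:ℝ) ^ (β/2 : ℝ) * ((1/(d:ℝ)) ^ (β/2 : ℝ) * S ^ (β/2 : ℝ)) := e1
    _ ≤ (d:ℝ) ^ (β/2 : ℝ) * (1 / (d:ℝ) * ∑ i, |u i| ^ β) := by
        exact mul_le_mul_of_nonneg_left hpm (Real.rpow_nonneg hd'.le _)
    _ = (d : ℝ) ^ (β / 2 - 1) * ∑ i, |u i| ^ β := by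
        rw [Real.rpow_sub hd', Real.rpow_one]
        ring

end auxiliary

/-- moments of the Euclidean norm on the `ℓ1` ball.
If `U` is uniform on the open `ℓ1` unit ball then for every `β ≥ 2`,
`E[‖U‖^β] ≤ d^{β/2}·Γ(β+1)·Γ(d+1)/Γ(d+β+1)`. -/

theorem moments_l1_ball {d : ℕ} (β : ℝ) (hβ : 2 ≤ β) :
    (∫ u, ‖u‖ ^ β ∂(uniformBallL1 d)) ≤
      (d : ℝ) ^ (β / 2) * Real.Gamma (β + 1) * Real.Gamma ((d : ℝ) + 1) /
        Real.Gamma ((d : ℝ) + β + 1) := by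
  rcases Nat.eq_zero_or_pos d with hd | hd
  · subst hd
    have hzero : ∀ u : Euc 0, ‖u‖ ^ β = 0 := by
      intro u
      have hn : ‖u‖ = 0 := by
        rw [EuclideanSpace.norm_eq]
        simp
      rw [hn, Real.zero_rpow (by linarith)]
    rw [show (fun u : Euc 0 => ‖u‖ ^ β) = fun _ => (0:ℝ) from funext hzero]
    rw [integral_zero]
    rw [Nat.cast_zero, Real.zero_rpow (by intro h; rw [div_eq_zero_iff] at h; rcases h with h | h <;> linarith)]
    have hΓ1 : 0 < Real.Gamma ((0:ℕ) + β + 1) := Real.Gamma_pos_of_pos (by push_cast; linarith)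
    positivity
  · have hd' : (0:ℝ) < d := by exact_mod_cast hd
    have hβ0 : (0:ℝ) ≤ β := by linarith
    have hΓd : 0 < Real.Gamma ((d:ℝ) + 1) := Real.Gamma_pos_of_pos (by positivity)
    have hΓdβ : 0 < Real.Gamma ((d:ℝ) + β + 1) := Real.Gamma_pos_of_pos (by positivity)
    have hΓβ : 0 < Real.Gamma (β + 1) := Real.Gamma_pos_of_pos (by linarith)
    set V : ℝ := 2 ^ d / Real.Gamma ((d:ℝ) + 1) with hVdef
    have hVpos : 0 < V := by positivity
    set A : ℝ := 2 ^ d * Real.Gamma (β + 1) / Real.Gamma ((d:ℝ) + β + 1) with hAdef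
    have hApos : 0 < A := by positivity
    set K : ℝ := (d:ℝ) ^ (β / 2 - 1) with hKdef
    have hKpos : 0 < K := Real.rpow_pos_of_pos hd' _
    have hvol : (volume : Measure (Euc d)) (l1Ball d) = ENNReal.ofReal V := volume_l1Ball hd
    -- rewrite the integral
    simp only [uniformBallL1]
    rw [integral_smul_measure, hvol, smul_eq_mul]
    have hmeas : AEStronglyMeasurable (fun u : Euc d => ‖u‖ ^ β)
        ((volume : Measure (Euc d)).restrict (l1Ball d)) :=
      (continuous_norm.rpow_const (fun _ => Or.inr hβ0)).aestronglyMeasurable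
    rw [integral_eq_lintegral_of_nonneg_ae
      (Filter.Eventually.of_forall fun u => Real.rpow_nonneg (norm_nonneg u) β) hmeas]
    -- bound the lintegral
    have hcoordmeas : ∀ i : Fin d, Measurable (fun u : Euc d => ENNReal.ofReal (|u i| ^ β)) := by
      intro i
      have : Measurable (fun u : Euc d => u i) := by
        exact (measurable_pi_apply i).comp (MeasurableEquiv.toLp 2 (Fin d → ℝ)).symm.measurable
      fun_prop
    have hbound : (∫⁻ u in l1Ball d, ENNReal.ofReal (‖u‖ ^ β)) ≤
        ENNReal.ofReal K * ((d : ℝ≥0∞) * ENNReal.ofReal A) := by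
      calc (∫⁻ u in l1Ball d, ENNReal.ofReal (‖u‖ ^ β))
          ≤ ∫⁻ u in l1Ball d, ENNReal.ofReal (K * ∑ i, |u i| ^ β) :=
            lintegral_mono fun u => ENNReal.ofReal_le_ofReal (norm_rpow_le_sum hd hβ u)
        _ = ∫⁻ u in l1Ball d, ENNReal.ofReal K * ∑ i, ENNReal.ofReal (|u i| ^ β) := by
            refine lintegral_congr fun u => ?_
            rw [ENNReal.ofReal_mul hKpos.le,
              ENNReal.ofReal_sum_of_nonneg fun i _ => Real.rpow_nonneg (abs_nonneg _) β]
        _ = ENNReal.ofReal K * ∑ i, ∫⁻ u in l1Ball d, ENNReal.ofReal (|u i| ^ β) := by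
            rw [lintegral_const_mul _ (Finset.measurable_sum _ fun i _ => hcoordmeas i),
              lintegral_finset_sum _ fun i _ => hcoordmeas i]
        _ = ENNReal.ofReal K * ((d : ℝ≥0∞) * ENNReal.ofReal A) := by
            rw [Finset.sum_congr rfl fun i _ => moment_ball_euc i hβ0, Finset.sum_const,
              Finset.card_univ, Fintype.card_fin, nsmul_eq_mul]
    -- convert to real numbers
    have hrhs_ne_top : ENNReal.ofReal K * ((d : ℝ≥0∞) * ENNReal.ofReal A) ≠ ⊤ := by
      exact ENNReal.mul_ne_top ENNReal.ofReal_ne_top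
        (ENNReal.mul_ne_top (ENNReal.natCast_ne_top d) ENNReal.ofReal_ne_top)
    have htoReal : ((∫⁻ u in l1Ball d, ENNReal.ofReal (‖u‖ ^ β))).toReal ≤ K * ((d:ℝ) * A) := by
      have h1 := ENNReal.toReal_mono hrhs_ne_top hbound
      rwa [ENNReal.toReal_mul, ENNReal.toReal_mul, ENNReal.toReal_ofReal hKpos.le,
        ENNReal.toReal_ofReal hApos.le, ENNReal.toReal_natCast] at h1
    have hinv : ((ENNReal.ofReal V)⁻¹).toReal = V⁻¹ := by
      rw [ENNReal.toReal_inv, ENNReal.toReal_ofReal hVpos.le]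
    rw [hinv]
    calc V⁻¹ * ((∫⁻ u in l1Ball d, ENNReal.ofReal (‖u‖ ^ β))).toReal
        ≤ V⁻¹ * (K * ((d:ℝ) * A)) := by
          exact mul_le_mul_of_nonneg_left htoReal (inv_nonneg.mpr hVpos.le)
      _ = (d : ℝ) ^ (β / 2) * Real.Gamma (β + 1) * Real.Gamma ((d : ℝ) + 1) /
          Real.Gamma ((d : ℝ) + β + 1) := by
          have hKd : K * (d:ℝ) = (d:ℝ) ^ (β / 2) := by
            rw [hKdef, Real.rpow_sub hd', Real.rpow_one, div_mul_cancel₀]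
            exact ne_of_gt hd'
          rw [hVdef, hAdef, ← mul_assoc, mul_comm K ((d:ℝ))] at *
          field_simp
          rw [← hKd]
end
end

section
/- Consider the unconstrained iteration x_{t+1} = x_t − η_t g_t in ℝ^d with deterministic step sizes η_t > 0. Let f : ℝ^d → ℝ be differentiable with L̄-Lipschitz gradient and f* = inf_{x∈ℝ^d} f(x) > −∞. Assume there are nonnegative reals b_t, v_t and m ≥ 0 such that for every t ≥ 1, almost surely ‖E[g_t | x_t] − ∇f(x_t)‖ ≤ b_t and E[‖g_t‖²] ≤ v_t + m·E[‖∇f(x_t)‖²], and assume L̄ η_t m < 1 for all t. Let T ≥ 1 and let S be a random variable with values in {1,…,T}, independent of (x_1,…,x_T, g_1,…,g_T), with P(S = t) = η_t(1 − L̄ η_t m) / Σ_{s=1}^{T} η_s(1 − L̄ η_s m). Then E[‖∇f(x_S)‖²] ≤ (2(E[f(x₁)] − f*) + Σ_{t=1}^{T} η_t(b_t² + L̄ η_t v_t)) / Σ_{t=1}^{T} η_t(1 − L̄ η_t m). -/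
open MeasureTheory ProbabilityTheory Real
open scoped RealInnerProductSpace ENNReal NNReal BigOperators

noncomputable section

lemma euc_abs_coord_le {d : ℕ} (x : Euc d) (i : Fin d) : |x i| ≤ ‖x‖ := by
  rw [EuclideanSpace.norm_eq]
  rw [← Real.sqrt_sq_eq_abs]
  apply Real.sqrt_le_sqrt
  have : |x i| ^ 2 ≤ ∑ j, |x j| ^ 2 :=
    Finset.single_le_sum (f := fun j => |x j| ^ 2) (fun j _ => by positivity) (Finset.mem_univ i)
  simpa [sq_abs] using this

lemma descent_lemma {d : ℕ} {Lbar : ℝ} (hL : 0 ≤ Lbar) {f : Euc d → ℝ}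
    (hf : Differentiable ℝ f)
    (hlip : ∀ u v : Euc d, ‖gradient f u - gradient f v‖ ≤ Lbar * ‖u - v‖)
    (u w : Euc d) :
    f w ≤ f u + ⟪gradient f u, w - u⟫ + Lbar / 2 * ‖w - u‖ ^ 2 := by
  set v : Euc d := w - u with hv
  have hgrad : ∀ p : Euc d, (fderiv ℝ f p : Euc d → ℝ) = fun y => ⟪gradient f p, y⟫ := by
    intro p
    have h1 : HasFDerivAt f (InnerProductSpace.toDual ℝ (Euc d) (gradient f p)) p :=
      (hf p).hasGradientAt.hasFDerivAt
    rw [h1.fderiv]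
    rfl
  set φ : ℝ → ℝ := fun s => f (u + s • v) - s * ⟪gradient f u, v⟫ - Lbar * s ^ 2 / 2 * ‖v‖ ^ 2
    with hφ
  have hd : ∀ s : ℝ, HasDerivAt φ
      (⟪gradient f (u + s • v), v⟫ - ⟪gradient f u, v⟫ - Lbar * s * ‖v‖ ^ 2) s := by
    intro s
    have hline : HasDerivAt (fun s : ℝ => u + s • v) v s := by
      simpa using ((hasDerivAt_id s).smul_const v).const_add u
    have hcomp : HasDerivAt (fun s : ℝ => f (u + s • v)) (⟪gradient f (u + s • v), v⟫) s := by
      have := (hf (u + s • v)).hasFDerivAt.comp_hasDerivAt s hline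
      rw [hgrad (u + s • v)] at this
      exact this
    have h2 : HasDerivAt (fun s : ℝ => s * ⟪gradient f u, v⟫) (⟪gradient f u, v⟫) s := by
      simpa using (hasDerivAt_id s).mul_const (⟪gradient f u, v⟫)
    have h3 : HasDerivAt (fun s : ℝ => Lbar * s ^ 2 / 2 * ‖v‖ ^ 2) (Lbar * s * ‖v‖ ^ 2) s := by
      have : HasDerivAt (fun s : ℝ => s ^ 2) (2 * s) s := by simpa using hasDerivAt_pow 2 s
      have := ((this.const_mul Lbar).div_const 2).mul_const (‖v‖ ^ 2)
      have e : Lbar * s * ‖v‖ ^ 2 = Lbar * (2 * s) / 2 * ‖v‖ ^ 2 := by ring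
      rw [e]
      exact this
    exact (hcomp.sub h2).sub h3
  have hmono : AntitoneOn φ (Set.Icc 0 1) := by
    apply antitoneOn_of_deriv_nonpos (convex_Icc 0 1)
    · exact (fun s _ => (hd s).differentiableAt.continuousAt.continuousWithinAt)
    · intro s hs
      exact (hd s).differentiableAt.differentiableWithinAt
    · intro s hs
      rw [interior_Icc] at hs
      rw [(hd s).deriv]
      have hb : ⟪gradient f (u + s • v) - gradient f u, v⟫ ≤ Lbar * s * ‖v‖ ^ 2 := by
        calc ⟪gradient f (u + s • v) - gradient f u, v⟫
            ≤ ‖gradient f (u + s • v) - gradient f u‖ * ‖v‖ := real_inner_le_norm _ _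
          _ ≤ (Lbar * ‖(u + s • v) - u‖) * ‖v‖ := by
              apply mul_le_mul_of_nonneg_right (hlip _ _) (norm_nonneg _)
          _ = Lbar * s * ‖v‖ ^ 2 := by
              rw [add_sub_cancel_left, norm_smul, Real.norm_eq_abs, abs_of_pos hs.1]
              ring
      have := inner_sub_left (𝕜 := ℝ) (gradient f (u + s • v)) (gradient f u) v
      rw [this] at hb
      linarith
  have h01 := hmono (Set.left_mem_Icc.2 zero_le_one) (Set.right_mem_Icc.2 zero_le_one) zero_le_one
  have hφ0 : φ 0 = f u := by simp [hφ]
  have hφ1 : φ 1 = f w - ⟪gradient f u, v⟫ - Lbar / 2 * ‖v‖ ^ 2 := by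
    simp [hφ, hv]
  rw [hφ0, hφ1] at h01
  linarith


lemma condexp_clm {Ω : Type*} {m : MeasurableSpace Ω} [m0 : MeasurableSpace Ω]
    (μ : Measure Ω) [IsFiniteMeasure μ] (hm : m ≤ m0)
    {E F : Type*} [NormedAddCommGroup E] [NormedSpace ℝ E] [CompleteSpace E]
    [NormedAddCommGroup F] [NormedSpace ℝ F] [CompleteSpace F]
    (L : E →L[ℝ] F) {g : Ω → E} (hg : Integrable g μ) :
    (fun ω => L ((μ[g|m]) ω)) =ᵐ[μ] μ[fun ω => L (g ω)|m] := by
  have hLg : Integrable (fun ω => L (g ω)) μ := L.integrable_comp hg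
  refine ae_eq_condExp_of_forall_setIntegral_eq hm hLg ?_ ?_ ?_
  · intro s _ _
    exact (L.integrable_comp integrable_condExp).integrableOn
  · intro s hs hμs
    rw [L.integral_comp_comm integrable_condExp.integrableOn,
      setIntegral_condExp hm hg hs, ← L.integral_comp_comm hg.integrableOn]
  · exact (L.continuous.comp_stronglyMeasurable stronglyMeasurable_condExp).aestronglyMeasurable

lemma inner_condexp {d : ℕ} {Ω : Type*} {m : MeasurableSpace Ω} [m0 : MeasurableSpace Ω]
    (μ : Measure Ω) [IsProbabilityMeasure μ] (hm : m ≤ m0)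
    {h g : Ω → Euc d} (hhm : StronglyMeasurable[m] h) (hhm0 : Measurable h)
    (hgm : Measurable g) (hg : Integrable g μ)
    (hh2 : Integrable (fun ω => ‖h ω‖ ^ 2) μ) (hg2 : Integrable (fun ω => ‖g ω‖ ^ 2) μ) :
    Integrable (fun ω => ⟪h ω, (μ[g|m]) ω⟫) μ ∧
      (∫ ω, ⟪h ω, g ω⟫ ∂μ) = ∫ ω, ⟪h ω, (μ[g|m]) ω⟫ ∂μ := by
  have hbound : Integrable (fun ω => (‖h ω‖ ^ 2 + ‖g ω‖ ^ 2) / 2) μ := (hh2.add hg2).div_const 2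
  -- coordinatewise facts
  have key : ∀ i : Fin d,
      Integrable (fun ω => h ω i * (μ[g|m]) ω i) μ ∧ Integrable (fun ω => h ω i * g ω i) μ ∧
        (∫ ω, h ω i * g ω i ∂μ) = ∫ ω, h ω i * (μ[g|m]) ω i ∂μ := by
    intro i
    have hgi : Integrable (fun ω => g ω i) μ := (EuclideanSpace.proj i (𝕜 := ℝ)).integrable_comp hg
    have hhgi : Integrable (fun ω => h ω i * g ω i) μ := by
      refine hbound.mono' ((((EuclideanSpace.proj (𝕜:=ℝ) i).continuous.measurable.comp hhm0).mul ((EuclideanSpace.proj (𝕜:=ℝ) i).continuous.measurable.comp hgm)).aestronglyMeasurable) ?_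
      filter_upwards with ω
      have h1 : |h ω i| ≤ ‖h ω‖ := by
        have := EuclideanSpace.norm_eq (h ω)
        rw [← Real.sqrt_sq_eq_abs]
        rw [this]
        apply Real.sqrt_le_sqrt
        have : |h ω i| ^ 2 ≤ ∑ j, |h ω j| ^ 2 :=
          Finset.single_le_sum (f := fun j => |h ω j| ^ 2) (fun j _ => by positivity)
            (Finset.mem_univ i)
        simpa [sq_abs] using this
      have h2 : |g ω i| ≤ ‖g ω‖ := by
        rw [← Real.sqrt_sq_eq_abs, EuclideanSpace.norm_eq (g ω)]
        apply Real.sqrt_le_sqrt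
        have : |g ω i| ^ 2 ≤ ∑ j, |g ω j| ^ 2 :=
          Finset.single_le_sum (f := fun j => |g ω j| ^ 2) (fun j _ => by positivity)
            (Finset.mem_univ i)
        simpa [sq_abs] using this
      have hnn : (0:ℝ) ≤ ‖h ω‖ := norm_nonneg _
      have hnn' : (0:ℝ) ≤ ‖g ω‖ := norm_nonneg _
      have : ‖h ω i * g ω i‖ = |h ω i| * |g ω i| := by rw [Real.norm_eq_abs, abs_mul]
      rw [this]
      nlinarith [abs_nonneg (h ω i), abs_nonneg (g ω i), sq_nonneg (‖h ω‖ - ‖g ω‖)]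
    have hhi : StronglyMeasurable[m] (fun ω => h ω i) :=
      (EuclideanSpace.proj i (𝕜 := ℝ)).continuous.comp_stronglyMeasurable hhm
    have hmul := condExp_mul_of_stronglyMeasurable_left (μ := μ) hhi hhgi hgi
    have heq1 : (∫ ω, h ω i * g ω i ∂μ) = ∫ ω, h ω i * (μ[fun ω => g ω i|m]) ω ∂μ := by
      rw [← integral_condExp hm (f := fun ω => h ω i * g ω i)]
      exact integral_congr_ae hmul
    have hint1 : Integrable (fun ω => h ω i * (μ[fun ω => g ω i|m]) ω) μ :=
      (integrable_condExp (f := fun ω => h ω i * g ω i)).congr hmul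
    have hcoord : (fun ω => (μ[g|m]) ω i) =ᵐ[μ] μ[fun ω => g ω i|m] :=
      condexp_clm μ hm (EuclideanSpace.proj i (𝕜 := ℝ)) hg
    have hcoord' : (fun ω => h ω i * (μ[g|m]) ω i) =ᵐ[μ] fun ω => h ω i * (μ[fun ω => g ω i|m]) ω := by
      filter_upwards [hcoord] with ω hω
      rw [hω]
    refine ⟨hint1.congr hcoord'.symm, hhgi, ?_⟩
    rw [heq1, integral_congr_ae hcoord']
  have hinner : ∀ (a c : Euc d), ⟪a, c⟫ = ∑ i, a i * c i := by
    intro a c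
    simp [PiLp.inner_apply, RCLike.inner_apply, conj_trivial]
    exact Finset.sum_congr rfl (fun i _ => mul_comm _ _)
  constructor
  · have : (fun ω => ⟪h ω, (μ[g|m]) ω⟫) = fun ω => ∑ i, h ω i * (μ[g|m]) ω i := by
      funext ω; exact hinner _ _
    rw [this]
    exact integrable_finset_sum _ (fun i _ => (key i).1)
  · have e1 : (fun ω => ⟪h ω, g ω⟫) = fun ω => ∑ i, h ω i * g ω i := by
      funext ω; exact hinner _ _
    have e2 : (fun ω => ⟪h ω, (μ[g|m]) ω⟫) = fun ω => ∑ i, h ω i * (μ[g|m]) ω i := by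
      funext ω; exact hinner _ _
    rw [e1, e2, integral_finset_sum _ (fun i _ => (key i).2.1),
      integral_finset_sum _ (fun i _ => (key i).1)]
    exact Finset.sum_congr rfl (fun i _ => (key i).2.2)

/-- guarantee for a randomly sampled iterate.
For the unconstrained iteration `x_{t+1} = x_t − η_t g_t` with biased stochastic
gradients, and `S` an independent random index with
`P(S = t) ∝ η_t(1 − L̄η_t m)`, one has
`E[‖∇f(x_S)‖²] ≤ (2(E[f(x₁)] − f*) + Σ η_t(b_t² + L̄η_t v_t)) / Σ η_t(1 − L̄η_t m)`. -/
theorem random_iterate_guarantee {d : ℕ}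
    {Ω : Type} [MeasurableSpace Ω] (μ : Measure Ω) [IsProbabilityMeasure μ]
    (Lbar : ℝ) (hLbar : 0 < Lbar) (f : Euc d → ℝ) (hf : Differentiable ℝ f)
    (hlip : ∀ u v : Euc d, ‖gradient f u - gradient f v‖ ≤ Lbar * ‖u - v‖)
    (hbdd : BddBelow (Set.range f))
    (η : ℕ → ℝ) (hη : ∀ t, 1 ≤ t → 0 < η t)
    (x g : ℕ → Ω → Euc d)
    (hxm : ∀ t, Measurable (x t)) (hgm : ∀ t, Measurable (g t))
    (hiter : ∀ t, 1 ≤ t → ∀ ω, x (t + 1) ω = x t ω - η t • g t ω)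
    (b v : ℕ → ℝ) (m : ℝ) (hb : ∀ t, 0 ≤ b t) (hv : ∀ t, 0 ≤ v t) (hm : 0 ≤ m)
    (hbias : ∀ t, 1 ≤ t → ∀ᵐ ω ∂μ,
      ‖(μ[g t | MeasurableSpace.comap (x t) inferInstance]) ω - gradient f (x t ω)‖ ≤ b t)
    (hvar : ∀ t, 1 ≤ t →
      (∫ ω, ‖g t ω‖ ^ 2 ∂μ) ≤ v t + m * ∫ ω, ‖gradient f (x t ω)‖ ^ 2 ∂μ)
    (hstep : ∀ t, 1 ≤ t → Lbar * η t * m < 1)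
    (T : ℕ) (hT : 1 ≤ T)
    (S : Ω → ℕ) (hSm : Measurable S)
    (hSrange : ∀ᵐ ω ∂μ, S ω ∈ Finset.Icc 1 T)
    (hSindep : IndepFun S (fun ω => fun t : Fin T => (x ((t : ℕ) + 1) ω, g ((t : ℕ) + 1) ω)) μ)
    (hSlaw : ∀ t ∈ Finset.Icc 1 T,
      (μ {ω | S ω = t}).toReal =
        η t * (1 - Lbar * η t * m) / ∑ s ∈ Finset.Icc 1 T, η s * (1 - Lbar * η s * m))
    (hint1 : ∀ t, Integrable (fun ω => ‖g t ω‖ ^ 2) μ)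
    (hint2 : ∀ t, Integrable (fun ω => ‖gradient f (x t ω)‖ ^ 2) μ)
    (hint3 : ∀ t, Integrable (g t) μ)
    (hint4 : ∀ t, Integrable (fun ω => f (x t ω)) μ)
    (hint5 : Integrable (fun ω => ‖gradient f (x (S ω) ω)‖ ^ 2) μ) :
    (∫ ω, ‖gradient f (x (S ω) ω)‖ ^ 2 ∂μ) ≤
      (2 * ((∫ ω, f (x 1 ω) ∂μ) - ⨅ y, f y) +
          ∑ t ∈ Finset.Icc 1 T, η t * ((b t) ^ 2 + Lbar * η t * v t)) /
        ∑ t ∈ Finset.Icc 1 T, η t * (1 - Lbar * η t * m) := by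
  classical
  have hgc : Continuous (gradient f) := by
    have hgl : LipschitzWith (Real.toNNReal Lbar) (gradient f) := by
      apply LipschitzWith.of_dist_le_mul
      intro u' v'
      rw [dist_eq_norm, dist_eq_norm, Real.coe_toNNReal Lbar hLbar.le]
      exact hlip u' v'
    exact hgl.continuous
  -- the sum of weights is positive
  have hwpos : ∀ t ∈ Finset.Icc 1 T, 0 < η t * (1 - Lbar * η t * m) := by
    intro t ht
    obtain ⟨h1, _⟩ := Finset.mem_Icc.mp ht
    have := hstep t h1
    have := hη t h1
    nlinarith
  have hWpos : 0 < ∑ t ∈ Finset.Icc 1 T, η t * (1 - Lbar * η t * m) :=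
    Finset.sum_pos hwpos ⟨1, Finset.mem_Icc.mpr ⟨le_refl 1, hT⟩⟩
  -- key per-step bound
  have key : ∀ t, 1 ≤ t →
      η t * (1 - Lbar * η t * m) * (∫ ω, ‖gradient f (x t ω)‖ ^ 2 ∂μ) ≤
        2 * ((∫ ω, f (x t ω) ∂μ) - ∫ ω, f (x (t+1) ω) ∂μ) +
          η t * ((b t) ^ 2 + Lbar * η t * v t) := by
    intro t ht
    have hηt := hη t ht
    set h : Ω → Euc d := fun ω => gradient f (x t ω) with hh
    have hhmeas : Measurable h := hgc.measurable.comp (hxm t)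
    -- integrability of the inner product with g t
    have hIp : Integrable (fun ω => ⟪h ω, g t ω⟫) μ := by
      refine (((hint2 t).add (hint1 t)).div_const 2).mono'
        ((hhmeas.inner (hgm t)).aestronglyMeasurable) ?_
      filter_upwards with ω
      have h1 : |⟪h ω, g t ω⟫| ≤ ‖h ω‖ * ‖g t ω‖ := abs_real_inner_le_norm _ _
      have h2 : ‖h ω‖ * ‖g t ω‖ ≤ (‖h ω‖ ^ 2 + ‖g t ω‖ ^ 2) / 2 := by
        nlinarith [sq_nonneg (‖h ω‖ - ‖g t ω‖)]
      rw [Real.norm_eq_abs]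
      exact h1.trans h2
    -- descent inequality pointwise
    have hpt : ∀ ω, f (x (t+1) ω) ≤
        f (x t ω) - η t * ⟪h ω, g t ω⟫ + Lbar / 2 * η t ^ 2 * ‖g t ω‖ ^ 2 := by
      intro ω
      have hd := descent_lemma hLbar.le hf hlip (x t ω) (x (t+1) ω)
      have hxd : x (t+1) ω - x t ω = -(η t • g t ω) := by
        rw [hiter t ht ω]; abel
      rw [hxd] at hd
      have e1 : ⟪gradient f (x t ω), -(η t • g t ω)⟫ = -(η t * ⟪h ω, g t ω⟫) := by
        rw [inner_neg_right, real_inner_smul_right, hh]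
      have e2 : ‖-(η t • g t ω)‖ ^ 2 = η t ^ 2 * ‖g t ω‖ ^ 2 := by
        rw [norm_neg, norm_smul, Real.norm_eq_abs, mul_pow, sq_abs]
      rw [e1, e2] at hd
      linarith
    -- integrate
    have hrhs1 : Integrable (fun ω => f (x t ω) - η t * ⟪h ω, g t ω⟫) μ :=
      (hint4 t).sub (hIp.const_mul (η t))
    have hrhs2 : Integrable (fun ω => Lbar / 2 * η t ^ 2 * ‖g t ω‖ ^ 2) μ :=
      (hint1 t).const_mul (Lbar / 2 * η t ^ 2)
    have hF1 : (∫ ω, f (x (t+1) ω) ∂μ) ≤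
        (∫ ω, f (x t ω) ∂μ) - η t * (∫ ω, ⟪h ω, g t ω⟫ ∂μ)
          + Lbar / 2 * η t ^ 2 * ∫ ω, ‖g t ω‖ ^ 2 ∂μ := by
      have := integral_mono (hint4 (t+1)) (hrhs1.add hrhs2) hpt
      simp only [Pi.add_apply] at this
      rwa [integral_add hrhs1 hrhs2, integral_sub (hint4 t) (hIp.const_mul (η t)),
        integral_const_mul, integral_const_mul] at this
    -- conditional expectation step
    have hmtle : MeasurableSpace.comap (x t) inferInstance ≤
        (inferInstance : MeasurableSpace Ω) := (hxm t).comap_le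
    have hxmt : Measurable[MeasurableSpace.comap (x t) inferInstance] (x t) :=
      measurable_iff_comap_le.mpr le_rfl
    have hhsm : StronglyMeasurable[MeasurableSpace.comap (x t) inferInstance] h :=
      hgc.comp_stronglyMeasurable hxmt.stronglyMeasurable
    obtain ⟨hci, hce⟩ :=
      inner_condexp μ hmtle hhsm hhmeas (hgm t) (hint3 t) (hint2 t) (hint1 t)
    -- lower bound on the conditional inner product
    have hlow : (∫ ω, ‖h ω‖ ^ 2 ∂μ) / 2 - (b t) ^ 2 / 2 ≤
        ∫ ω, ⟪h ω, (μ[g t|MeasurableSpace.comap (x t) inferInstance]) ω⟫ ∂μ := by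
      have hib : Integrable (fun ω => ‖h ω‖ ^ 2 / 2 - (b t) ^ 2 / 2) μ :=
        ((hint2 t).div_const 2).sub (integrable_const _)
      have hmono := integral_mono_ae hib hci ?_
      · rwa [integral_sub ((hint2 t).div_const 2) (integrable_const _),
          integral_div, integral_const, measureReal_def, measure_univ, ENNReal.toReal_one, one_smul] at hmono
      · filter_upwards [hbias t ht] with ω hbω
        set a := h ω with ha
        set c := (μ[g t|MeasurableSpace.comap (x t) inferInstance]) ω with hc
        have e : ⟪a, c⟫ = ‖a‖ ^ 2 - ⟪a, a - c⟫ := by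
          rw [inner_sub_right, real_inner_self_eq_norm_sq]; ring
        have h1 : ⟪a, a - c⟫ ≤ ‖a‖ * ‖a - c‖ := real_inner_le_norm _ _
        have h2 : ‖a - c‖ ≤ b t := by rw [norm_sub_rev]; exact hbω
        have h3 : ‖a‖ * ‖a - c‖ ≤ ‖a‖ * b t :=
          mul_le_mul_of_nonneg_left h2 (norm_nonneg a)
        nlinarith [sq_nonneg (‖a‖ - b t), norm_nonneg a]
    have hA : (∫ ω, ‖h ω‖ ^ 2 ∂μ) / 2 - (b t) ^ 2 / 2 ≤ ∫ ω, ⟪h ω, g t ω⟫ ∂μ := by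
      rw [hce]; exact hlow
    have hG := hvar t ht
    have h2 : Lbar / 2 * η t ^ 2 * (∫ ω, ‖g t ω‖ ^ 2 ∂μ) ≤
        Lbar / 2 * η t ^ 2 * (v t + m * ∫ ω, ‖gradient f (x t ω)‖ ^ 2 ∂μ) := by
      apply mul_le_mul_of_nonneg_left hG
      positivity
    have h3 : η t * ((∫ ω, ‖h ω‖ ^ 2 ∂μ) / 2 - (b t) ^ 2 / 2) ≤
        η t * ∫ ω, ⟪h ω, g t ω⟫ ∂μ :=
      mul_le_mul_of_nonneg_left hA hηt.le
    have hhD : (∫ ω, ‖h ω‖ ^ 2 ∂μ) = ∫ ω, ‖gradient f (x t ω)‖ ^ 2 ∂μ := rfl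
    rw [hhD] at h3
    nlinarith [hF1, h2, h3]
  -- telescoping
  have tele : ∀ n : ℕ, ∑ t ∈ Finset.Icc 1 n,
      ((∫ ω, f (x t ω) ∂μ) - ∫ ω, f (x (t+1) ω) ∂μ) =
        (∫ ω, f (x 1 ω) ∂μ) - ∫ ω, f (x (n+1) ω) ∂μ := by
    intro n
    induction n with
    | zero => simp
    | succ k ih =>
        rw [Finset.sum_Icc_succ_top (Nat.succ_le_succ (Nat.zero_le k)), ih]
        ring
  have sum_key : ∑ t ∈ Finset.Icc 1 T,
      η t * (1 - Lbar * η t * m) * (∫ ω, ‖gradient f (x t ω)‖ ^ 2 ∂μ) ≤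
        2 * ((∫ ω, f (x 1 ω) ∂μ) - ∫ ω, f (x (T+1) ω) ∂μ) +
          ∑ t ∈ Finset.Icc 1 T, η t * ((b t) ^ 2 + Lbar * η t * v t) := by
    calc ∑ t ∈ Finset.Icc 1 T,
        η t * (1 - Lbar * η t * m) * (∫ ω, ‖gradient f (x t ω)‖ ^ 2 ∂μ)
        ≤ ∑ t ∈ Finset.Icc 1 T,
          (2 * ((∫ ω, f (x t ω) ∂μ) - ∫ ω, f (x (t+1) ω) ∂μ) +
            η t * ((b t) ^ 2 + Lbar * η t * v t)) :=
          Finset.sum_le_sum (fun t ht' => key t (Finset.mem_Icc.mp ht').1)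
      _ = _ := by
          rw [Finset.sum_add_distrib, ← Finset.mul_sum, tele T]
  have hfstar : (⨅ y, f y) ≤ ∫ ω, f (x (T+1) ω) ∂μ := by
    have hple : ∀ ω, (⨅ y, f y) ≤ f (x (T+1) ω) := fun ω => ciInf_le hbdd _
    calc (⨅ y, f y) = ∫ _ω, (⨅ y, f y) ∂μ := by
          rw [integral_const, measureReal_def, measure_univ, ENNReal.toReal_one, one_smul]
      _ ≤ _ := integral_mono (integrable_const _) (hint4 (T+1)) hple
  have main_bound : ∑ t ∈ Finset.Icc 1 T,
      η t * (1 - Lbar * η t * m) * (∫ ω, ‖gradient f (x t ω)‖ ^ 2 ∂μ) ≤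
        2 * ((∫ ω, f (x 1 ω) ∂μ) - ⨅ y, f y) +
          ∑ t ∈ Finset.Icc 1 T, η t * ((b t) ^ 2 + Lbar * η t * v t) := by
    linarith [sum_key, hfstar]
  -- decomposition over the value of S
  have hint_each : ∀ t ∈ Finset.Icc 1 T, Integrable
      (fun ω => if S ω = t then ‖gradient f (x t ω)‖ ^ 2 else 0) μ := by
    intro t _
    have hmeas : Measurable (fun ω => if S ω = t then ‖gradient f (x t ω)‖ ^ 2 else 0) := by
      exact Measurable.ite (hSm (measurableSet_singleton t))
        ((hgc.measurable.comp (hxm t)).norm.pow_const 2) measurable_const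
    refine (hint2 t).mono' hmeas.aestronglyMeasurable ?_
    filter_upwards with ω
    rw [Real.norm_eq_abs]
    split_ifs <;> simp [abs_of_nonneg, sq_nonneg, abs_pow, sq_abs, norm_nonneg] <;> positivity
  have hDdecomp : (∫ ω, ‖gradient f (x (S ω) ω)‖ ^ 2 ∂μ) =
      ∑ t ∈ Finset.Icc 1 T, ∫ ω, (if S ω = t then ‖gradient f (x t ω)‖ ^ 2 else 0) ∂μ := by
    rw [← integral_finset_sum _ hint_each]
    apply integral_congr_ae
    filter_upwards [hSrange] with ω hω
    rw [Finset.sum_ite_eq (Finset.Icc 1 T) (S ω) (fun t => ‖gradient f (x t ω)‖ ^ 2), if_pos hω]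
  -- each piece via independence
  have hpiece : ∀ t ∈ Finset.Icc 1 T,
      (∫ ω, (if S ω = t then ‖gradient f (x t ω)‖ ^ 2 else 0) ∂μ) =
        (μ {ω | S ω = t}).toReal * ∫ ω, ‖gradient f (x t ω)‖ ^ 2 ∂μ := by
    intro t ht'
    obtain ⟨h1t, hTt⟩ := Finset.mem_Icc.mp ht'
    have hj : t - 1 < T := by omega
    set j : Fin T := ⟨t - 1, hj⟩ with hjdef
    have hφm : Measurable (fun n : ℕ => if n = t then (1:ℝ) else 0) :=
      measurable_from_top
    have hψm : Measurable (fun y : Fin T → Euc d × Euc d => ‖gradient f (y j).1‖ ^ 2) :=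
      ((hgc.measurable.comp (measurable_fst.comp (measurable_pi_apply j))).norm.pow_const 2)
    have hIndepc := hSindep.comp hφm hψm
    have hψY : ((fun y : Fin T → Euc d × Euc d => ‖gradient f (y j).1‖ ^ 2) ∘
        (fun ω => fun s : Fin T => (x ((s : ℕ) + 1) ω, g ((s : ℕ) + 1) ω))) =
        fun ω => ‖gradient f (x t ω)‖ ^ 2 := by
      funext ω
      have : (t - 1) + 1 = t := by omega
      simp only [Function.comp_apply, hjdef]
      rw [this]
    have hφS : Integrable ((fun n : ℕ => if n = t then (1:ℝ) else 0) ∘ S) μ := by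
      refine (integrable_const (1:ℝ)).mono' (hφm.comp hSm).aestronglyMeasurable ?_
      filter_upwards with ω
      simp only [Function.comp_apply, Real.norm_eq_abs]
      split_ifs <;> simp
    have heqmul := hIndepc.integral_mul_eq_mul_integral hφS.aestronglyMeasurable (by rw [hψY]; exact (hint2 t).aestronglyMeasurable)
    have hsmeas : MeasurableSet {ω | S ω = t} := hSm (measurableSet_singleton t)
    have hφSi : ((fun n : ℕ => if n = t then (1:ℝ) else 0) ∘ S) =
        Set.indicator {ω | S ω = t} (fun _ => (1:ℝ)) := by
      funext ω
      rw [Set.indicator_apply]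
      by_cases hωt : S ω = t <;> simp [hωt]
    have hφSint : (∫ ω, ((fun n : ℕ => if n = t then (1:ℝ) else 0) ∘ S) ω ∂μ) =
        (μ {ω | S ω = t}).toReal := by
      rw [hφSi, integral_indicator_const (1:ℝ) hsmeas, smul_eq_mul, mul_one, measureReal_def]
    have hlhs : (fun ω => (if S ω = t then ‖gradient f (x t ω)‖ ^ 2 else 0)) =
        (((fun n : ℕ => if n = t then (1:ℝ) else 0) ∘ S) *
          ((fun y : Fin T → Euc d × Euc d => ‖gradient f (y j).1‖ ^ 2) ∘
          (fun ω => fun s : Fin T => (x ((s : ℕ) + 1) ω, g ((s : ℕ) + 1) ω)))) := by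
      rw [hψY]
      funext ω
      simp only [Pi.mul_apply, Function.comp_apply]
      by_cases hωt : S ω = t <;> simp [hωt]
    rw [hlhs, heqmul, hφSint, hψY]
  -- put it together
  have hfinal : (∫ ω, ‖gradient f (x (S ω) ω)‖ ^ 2 ∂μ) =
      (∑ t ∈ Finset.Icc 1 T,
        η t * (1 - Lbar * η t * m) * (∫ ω, ‖gradient f (x t ω)‖ ^ 2 ∂μ)) /
        ∑ t ∈ Finset.Icc 1 T, η t * (1 - Lbar * η t * m) := by
    rw [hDdecomp, Finset.sum_div]
    apply Finset.sum_congr rfl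
    intro t ht'
    rw [hpiece t ht', hSlaw t ht']
    ring
  rw [hfinal]
  exact div_le_div_iff_of_pos_right hWpos |>.mpr main_bound
end
end

section
/- Let Θ ⊆ ℝ^d be a nonempty closed convex set and consider the projected iteration x_{t+1} = Proj_Θ(x_t − η_t g_t) with deterministic step sizes η_t > 0 and x₁ ∈ Θ. Let f : ℝ^d → ℝ be α-strongly convex (α > 0). Assume there are nonnegative reals b_t, v_t and m ≥ 0 such that for every t ≥ 1, almost surely ‖E[g_t | x_t] − ∇f(x_t)‖ ≤ b_t and E[‖g_t‖²] ≤ v_t + m·E[‖∇f(x_t)‖²]. Then for every x ∈ Θ and every t ≥ 1, setting r_t = E[‖x_t − x‖²]: E[f(x_t) − f(x)] ≤ (r_t − r_{t+1})/(2η_t) − (α/4)·r_t + b_t²/α + (η_t/2)·(v_t + m·E[‖∇f(x_t)‖²]). -/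
open MeasureTheory ProbabilityTheory Real
open scoped RealInnerProductSpace ENNReal NNReal BigOperators

noncomputable section

/-- `p` is the Euclidean projection of `u` onto `Θ`. -/
def IsProj {d : ℕ} (Θ : Set (Euc d)) (u p : Euc d) : Prop :=
  p ∈ Θ ∧ ∀ z ∈ Θ, ‖p - u‖ ≤ ‖z - u‖

lemma my_condexp_clm {Ω : Type} {m m0 : MeasurableSpace Ω} (hm : m ≤ m0)
    {μ : @Measure Ω m0} [IsFiniteMeasure μ]
    {E F : Type*} [NormedAddCommGroup E] [NormedSpace ℝ E] [CompleteSpace E]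
    [NormedAddCommGroup F] [NormedSpace ℝ F] [CompleteSpace F]
    (T : E →L[ℝ] F) {g : Ω → E} (hg : Integrable g μ) :
    (fun ω => T ((μ[g|m]) ω)) =ᵐ[μ] μ[fun ω => T (g ω)|m] := by
  haveI : SigmaFinite (μ.trim hm) := inferInstance
  have hTg : Integrable (fun ω => T (g ω)) μ := T.integrable_comp hg
  refine ae_eq_condExp_of_forall_setIntegral_eq hm hTg
    (fun s hs hμs => (T.integrable_comp integrable_condExp).integrableOn)
    (fun s hs hμs => ?_)
    (StronglyMeasurable.aestronglyMeasurable (T.continuous.comp_stronglyMeasurable stronglyMeasurable_condExp))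
  rw [T.integral_comp_comm integrable_condExp.integrableOn,
    T.integral_comp_comm hg.integrableOn, setIntegral_condExp hm hg hs]

lemma my_abs_coord_le_norm {d : ℕ} (v : Euc d) (i : Fin d) : |v i| ≤ ‖v‖ := by
  rw [EuclideanSpace.norm_eq, ← Real.sqrt_sq_eq_abs]
  apply Real.sqrt_le_sqrt
  have := Finset.single_le_sum (f := fun j => ‖v j‖ ^ 2) (fun j _ => sq_nonneg _)
    (Finset.mem_univ i)
  simpa [Real.norm_eq_abs, sq_abs] using this

lemma my_proj_contract {d : ℕ} {Θ : Set (Euc d)} (hΘcv : Convex ℝ Θ)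
    {u p x0 : Euc d} (hproj : IsProj Θ u p) (hx0 : x0 ∈ Θ) :
    ‖p - x0‖ ^ 2 ≤ ‖u - x0‖ ^ 2 := by
  obtain ⟨hpΘ, hmin⟩ := hproj
  have hbdd : BddBelow (Set.range fun w : Θ => ‖u - (w : Euc d)‖) :=
    ⟨0, fun _ ⟨_, h⟩ => h ▸ norm_nonneg _⟩
  haveI : Nonempty Θ := ⟨⟨p, hpΘ⟩⟩
  have hinf : ‖u - p‖ = ⨅ w : Θ, ‖u - (w : Euc d)‖ := by
    refine le_antisymm (le_ciInf fun w => ?_) (ciInf_le hbdd ⟨p, hpΘ⟩)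
    rw [norm_sub_rev, norm_sub_rev u]
    exact hmin w w.2
  have hvar : ⟪u - p, x0 - p⟫ ≤ 0 :=
    (norm_eq_iInf_iff_real_inner_le_zero hΘcv hpΘ).mp hinf x0 hx0
  have hexp : ‖(u - p) + (p - x0)‖ ^ 2 =
      ‖u - p‖ ^ 2 + 2 * ⟪u - p, p - x0⟫ + ‖p - x0‖ ^ 2 := norm_add_sq_real _ _
  have heq : u - x0 = (u - p) + (p - x0) := by abel
  have hip : ⟪u - p, p - x0⟫ = -⟪u - p, x0 - p⟫ := by
    rw [← inner_neg_right]; congr 1; abel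
  rw [heq, hexp]
  nlinarith [sq_nonneg ‖u - p‖]

set_option maxHeartbeats 2000000 in
/-- one-step bound for projected SGD under strong convexity.
For the projected iteration `x_{t+1} = Proj_Θ(x_t − η_t g_t)` on a closed convex
`Θ`, with `f` `α`-strongly convex, for every `x ∈ Θ` and `t ≥ 1`, with
`r_t = E[‖x_t − x‖²]`:
`E[f(x_t) − f(x)] ≤ (r_t − r_{t+1})/(2η_t) − (α/4)r_t + b_t²/α + (η_t/2)(v_t + m·E[‖∇f(x_t)‖²])`. -/
theorem projected_step_strongly_convex {d : ℕ}
    {Ω : Type} [MeasurableSpace Ω] (μ : Measure Ω) [IsProbabilityMeasure μ]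
    (Θ : Set (Euc d)) (hΘne : Θ.Nonempty) (hΘcl : IsClosed Θ) (hΘcv : Convex ℝ Θ)
    (α : ℝ) (hα : 0 < α) (f : Euc d → ℝ) (hf : Differentiable ℝ f)
    (hsc : ∀ u w : Euc d, f w + ⟪gradient f w, u - w⟫ + α / 2 * ‖u - w‖ ^ 2 ≤ f u)
    (η : ℕ → ℝ) (hη : ∀ t, 1 ≤ t → 0 < η t)
    (x g : ℕ → Ω → Euc d)
    (hxm : ∀ t, Measurable (x t)) (hgm : ∀ t, Measurable (g t))
    (hx1 : ∀ ω, x 1 ω ∈ Θ)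
    (hiter : ∀ t, 1 ≤ t → ∀ ω, IsProj Θ (x t ω - η t • g t ω) (x (t + 1) ω))
    (b v : ℕ → ℝ) (m : ℝ) (hb : ∀ t, 0 ≤ b t) (hv : ∀ t, 0 ≤ v t) (hm : 0 ≤ m)
    (hbias : ∀ t, 1 ≤ t → ∀ᵐ ω ∂μ,
      ‖(μ[g t | MeasurableSpace.comap (x t) inferInstance]) ω - gradient f (x t ω)‖ ≤ b t)
    (hvar : ∀ t, 1 ≤ t →
      (∫ ω, ‖g t ω‖ ^ 2 ∂μ) ≤ v t + m * ∫ ω, ‖gradient f (x t ω)‖ ^ 2 ∂μ)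
    (hint1 : ∀ t, Integrable (fun ω => ‖g t ω‖ ^ 2) μ)
    (hint2 : ∀ t, Integrable (fun ω => ‖gradient f (x t ω)‖ ^ 2) μ)
    (hint3 : ∀ t, Integrable (g t) μ)
    (hint4 : ∀ t, Integrable (fun ω => f (x t ω)) μ)
    (hint5 : ∀ t, ∀ x0 : Euc d, Integrable (fun ω => ‖x t ω - x0‖ ^ 2) μ) :
    ∀ x0 ∈ Θ, ∀ t, 1 ≤ t →
      (∫ ω, f (x t ω) ∂μ) - f x0 ≤
        ((∫ ω, ‖x t ω - x0‖ ^ 2 ∂μ) - (∫ ω, ‖x (t + 1) ω - x0‖ ^ 2 ∂μ)) / (2 * η t) -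
            α / 4 * (∫ ω, ‖x t ω - x0‖ ^ 2 ∂μ) + (b t) ^ 2 / α +
          η t / 2 * (v t + m * ∫ ω, ‖gradient f (x t ω)‖ ^ 2 ∂μ) := by
  intro x0 hx0 t ht
  have hηt : 0 < η t := hη t ht
  have hm2 : MeasurableSpace.comap (x t) inferInstance ≤ ‹MeasurableSpace Ω› :=
    (hxm t).comap_le
  haveI hsf : SigmaFinite (μ.trim hm2) := inferInstance
  set gc : Ω → Euc d := μ[g t|MeasurableSpace.comap (x t) inferInstance] with hgcdef
  -- basic measurability
  have hxtm2 : Measurable[MeasurableSpace.comap (x t) inferInstance] (x t) := Measurable.of_comap_le le_rfl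
  have hhm : Measurable (fun ω => x t ω - x0) := (hxm t).sub measurable_const
  have hgradm : Measurable (gradient f) := by
    have h1 : Measurable (fderiv ℝ f) := measurable_fderiv (𝕜 := ℝ) (f := f)
    exact ((InnerProductSpace.toDual ℝ (Euc d)).symm.continuous.measurable).comp h1
  have hgxm : Measurable (fun ω => gradient f (x t ω)) := hgradm.comp (hxm t)
  -- coordinate-level conditional expectation manipulation
  have hcoord : ∀ i : Fin d,
      Integrable (fun ω => (x t ω - x0) i * g t ω i) μ ∧
      Integrable (fun ω => (x t ω - x0) i * gc ω i) μ ∧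
      (∫ ω, (x t ω - x0) i * g t ω i ∂μ) = ∫ ω, (x t ω - x0) i * gc ω i ∂μ := by
    intro i
    have hφm : StronglyMeasurable[MeasurableSpace.comap (x t) inferInstance] (fun ω => (x t ω - x0) i) := by
      have : Measurable[MeasurableSpace.comap (x t) inferInstance] (fun ω => (x t ω - x0) i) :=
        ((EuclideanSpace.proj (𝕜 := ℝ) i).continuous.measurable).comp
          (hxtm2.sub measurable_const)
      exact this.stronglyMeasurable
    have hψint : Integrable (fun ω => g t ω i) μ :=
      (EuclideanSpace.proj (𝕜 := ℝ) i).integrable_comp (hint3 t)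
    have hmulm : AEStronglyMeasurable (fun ω => (x t ω - x0) i * g t ω i) μ := by
      refine (Measurable.mul ?_ ?_).aestronglyMeasurable
      · exact ((EuclideanSpace.proj (𝕜 := ℝ) i).continuous.measurable).comp hhm
      · exact ((EuclideanSpace.proj (𝕜 := ℝ) i).continuous.measurable).comp (hgm t)
    have hmulint : Integrable (fun ω => (x t ω - x0) i * g t ω i) μ := by
      have hbound : Integrable
          (fun ω => (‖x t ω - x0‖ ^ 2 + ‖g t ω‖ ^ 2) / 2) μ :=
        ((hint5 t x0).add (hint1 t)).div_const 2
      refine Integrable.mono' hbound hmulm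
        (Filter.Eventually.of_forall fun ω => ?_)
      have h1 := my_abs_coord_le_norm (x t ω - x0) i
      have h2 := my_abs_coord_le_norm (g t ω) i
      have h3 : ‖(x t ω - x0) i * g t ω i‖ = |(x t ω - x0) i| * |g t ω i| := by
        rw [Real.norm_eq_abs, abs_mul]
      rw [h3]
      have h4 : |(x t ω - x0) i| * |g t ω i| ≤ ‖x t ω - x0‖ * ‖g t ω‖ :=
        mul_le_mul h1 h2 (abs_nonneg _) (norm_nonneg _)
      have h5 : ‖x t ω - x0‖ * ‖g t ω‖ ≤ (‖x t ω - x0‖ ^ 2 + ‖g t ω‖ ^ 2) / 2 := by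
        nlinarith [sq_nonneg (‖x t ω - x0‖ - ‖g t ω‖)]
      calc |(x t ω - x0) i| * |g t ω i| ≤ ‖x t ω - x0‖ * ‖g t ω‖ := h4
        _ ≤ (‖x t ω - x0‖ ^ 2 + ‖g t ω‖ ^ 2) / 2 := h5
    have hpull : μ[fun ω => (x t ω - x0) i * g t ω i|MeasurableSpace.comap (x t) inferInstance] =ᵐ[μ]
        fun ω => (x t ω - x0) i * (μ[fun ω => g t ω i|MeasurableSpace.comap (x t) inferInstance]) ω :=
      condExp_mul_of_stronglyMeasurable_left hφm hmulint hψint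
    have hgci : (fun ω => gc ω i) =ᵐ[μ] μ[fun ω => g t ω i|MeasurableSpace.comap (x t) inferInstance] :=
      my_condexp_clm hm2 (EuclideanSpace.proj (𝕜 := ℝ) i) (hint3 t)
    have hmix : (fun ω => (x t ω - x0) i * gc ω i) =ᵐ[μ]
        μ[fun ω => (x t ω - x0) i * g t ω i|MeasurableSpace.comap (x t) inferInstance] := by
      filter_upwards [hpull, hgci] with ω h1 h2
      rw [h2, h1]
    refine ⟨hmulint, Integrable.congr integrable_condExp hmix.symm, ?_⟩
    rw [integral_congr_ae hmix, integral_condExp hm2]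
  -- inner products as coordinate sums
  have hinner_g : ∀ ω, ⟪g t ω, x t ω - x0⟫ = ∑ i, (x t ω - x0) i * g t ω i := by
    intro ω
    rw [real_inner_comm]
    simp [PiLp.inner_apply, RCLike.inner_apply, conj_trivial]
    exact Finset.sum_congr rfl fun i _ => mul_comm _ _
  have hinner_gc : ∀ ω, ⟪gc ω, x t ω - x0⟫ = ∑ i, (x t ω - x0) i * gc ω i := by
    intro ω
    rw [real_inner_comm]
    simp [PiLp.inner_apply, RCLike.inner_apply, conj_trivial]
    exact Finset.sum_congr rfl fun i _ => mul_comm _ _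
  have hinng_int : Integrable (fun ω => ⟪g t ω, x t ω - x0⟫) μ := by
    have : (fun ω => ⟪g t ω, x t ω - x0⟫) =
        fun ω => ∑ i, (x t ω - x0) i * g t ω i := funext hinner_g
    rw [this]
    exact integrable_finset_sum _ fun i _ => (hcoord i).1
  have hinngc_int : Integrable (fun ω => ⟪gc ω, x t ω - x0⟫) μ := by
    have : (fun ω => ⟪gc ω, x t ω - x0⟫) =
        fun ω => ∑ i, (x t ω - x0) i * gc ω i := funext hinner_gc
    rw [this]
    exact integrable_finset_sum _ fun i _ => (hcoord i).2.1
  have hIeq : (∫ ω, ⟪g t ω, x t ω - x0⟫ ∂μ) = ∫ ω, ⟪gc ω, x t ω - x0⟫ ∂μ := by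
    rw [integral_congr_ae (Filter.Eventually.of_forall hinner_g),
      integral_congr_ae (Filter.Eventually.of_forall hinner_gc),
      integral_finset_sum _ fun i _ => (hcoord i).1,
      integral_finset_sum _ fun i _ => (hcoord i).2.1]
    exact Finset.sum_congr rfl fun i _ => (hcoord i).2.2
  -- inner product with the gradient
  have hinn_grad_int : Integrable (fun ω => ⟪gradient f (x t ω), x t ω - x0⟫) μ := by
    have hbound : Integrable
        (fun ω => (‖gradient f (x t ω)‖ ^ 2 + ‖x t ω - x0‖ ^ 2) / 2) μ :=
      ((hint2 t).add (hint5 t x0)).div_const 2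
    refine Integrable.mono' hbound
      (hgxm.inner hhm).aestronglyMeasurable (Filter.Eventually.of_forall fun ω => ?_)
    have h1 := abs_real_inner_le_norm (gradient f (x t ω)) (x t ω - x0)
    rw [Real.norm_eq_abs]
    nlinarith [sq_nonneg (‖gradient f (x t ω)‖ - ‖x t ω - x0‖)]
  -- the bias term
  have hD_int : Integrable (fun ω => ⟪gc ω - gradient f (x t ω), x t ω - x0⟫) μ := by
    have : (fun ω => ⟪gc ω - gradient f (x t ω), x t ω - x0⟫) =
        fun ω => ⟪gc ω, x t ω - x0⟫ - ⟪gradient f (x t ω), x t ω - x0⟫ :=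
      funext fun ω => inner_sub_left _ _ _
    rw [this]
    exact hinngc_int.sub hinn_grad_int
  have hDlow : ∀ᵐ ω ∂μ, -(α / 4 * ‖x t ω - x0‖ ^ 2 + (b t) ^ 2 / α) ≤
      ⟪gc ω - gradient f (x t ω), x t ω - x0⟫ := by
    filter_upwards [hbias t ht] with ω hω
    have h1 := abs_real_inner_le_norm (gc ω - gradient f (x t ω)) (x t ω - x0)
    have h2 : ‖gc ω - gradient f (x t ω)‖ * ‖x t ω - x0‖ ≤ b t * ‖x t ω - x0‖ :=
      mul_le_mul_of_nonneg_right hω (norm_nonneg _)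
    have hid : α * (α / 4 * ‖x t ω - x0‖ ^ 2 + (b t) ^ 2 / α - b t * ‖x t ω - x0‖) =
        (α / 2 * ‖x t ω - x0‖ - b t) ^ 2 := by
      field_simp; ring
    have h3 : b t * ‖x t ω - x0‖ ≤ α / 4 * ‖x t ω - x0‖ ^ 2 + (b t) ^ 2 / α := by
      nlinarith [sq_nonneg (α / 2 * ‖x t ω - x0‖ - b t), hα]
    have h4 : -(‖gc ω - gradient f (x t ω)‖ * ‖x t ω - x0‖) ≤
        ⟪gc ω - gradient f (x t ω), x t ω - x0⟫ := neg_le_of_neg_le (by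
      have := neg_abs_le ⟪gc ω - gradient f (x t ω), x t ω - x0⟫
      linarith)
    linarith
  have hDint_low : -(α / 4 * (∫ ω, ‖x t ω - x0‖ ^ 2 ∂μ) + (b t) ^ 2 / α) ≤
      ∫ ω, ⟪gc ω - gradient f (x t ω), x t ω - x0⟫ ∂μ := by
    have hlhs : Integrable (fun ω => -(α / 4 * ‖x t ω - x0‖ ^ 2 + (b t) ^ 2 / α)) μ :=
      (((hint5 t x0).const_mul (α / 4)).add (integrable_const _)).neg
    have := integral_mono_ae hlhs hD_int hDlow
    rw [integral_neg, integral_add ((hint5 t x0).const_mul (α / 4)) (integrable_const _),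
      integral_const_mul, integral_const] at this
    simpa [measure_univ] using this
  -- strong convexity term
  have hgrad_low : ∀ ω, f (x t ω) - f x0 + α / 2 * ‖x t ω - x0‖ ^ 2 ≤
      ⟪gradient f (x t ω), x t ω - x0⟫ := by
    intro ω
    have hs := hsc x0 (x t ω)
    have h1 : ⟪gradient f (x t ω), x0 - x t ω⟫ = -⟪gradient f (x t ω), x t ω - x0⟫ := by
      rw [← inner_neg_right]; congr 1; abel
    have h2 : ‖x0 - x t ω‖ = ‖x t ω - x0‖ := norm_sub_rev _ _
    rw [h1, h2] at hs
    linarith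
  have hgrad_int_low : (∫ ω, f (x t ω) ∂μ) - f x0 +
      α / 2 * (∫ ω, ‖x t ω - x0‖ ^ 2 ∂μ) ≤
      ∫ ω, ⟪gradient f (x t ω), x t ω - x0⟫ ∂μ := by
    have hc1 : Integrable (fun ω => f (x t ω) - f x0) μ :=
      (hint4 t).sub (integrable_const _)
    have hc2 : Integrable (fun ω => α / 2 * ‖x t ω - x0‖ ^ 2) μ :=
      (hint5 t x0).const_mul _
    have hlhs : Integrable (fun ω => f (x t ω) - f x0 + α / 2 * ‖x t ω - x0‖ ^ 2) μ :=
      hc1.add hc2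
    have := integral_mono hlhs hinn_grad_int hgrad_low
    rw [integral_add hc1 hc2, integral_sub (hint4 t) (integrable_const _),
      integral_const_mul, integral_const] at this
    simpa [measure_univ] using this
  -- lower bound on ∫⟪g, x - x0⟫
  have hIlow : (∫ ω, f (x t ω) ∂μ) - f x0 +
      α / 4 * (∫ ω, ‖x t ω - x0‖ ^ 2 ∂μ) - (b t) ^ 2 / α ≤
      ∫ ω, ⟪g t ω, x t ω - x0⟫ ∂μ := by
    have hsplit : (∫ ω, ⟪gc ω, x t ω - x0⟫ ∂μ) =
        (∫ ω, ⟪gc ω - gradient f (x t ω), x t ω - x0⟫ ∂μ) +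
        ∫ ω, ⟪gradient f (x t ω), x t ω - x0⟫ ∂μ := by
      rw [← integral_add hD_int hinn_grad_int]
      refine integral_congr_ae (Filter.Eventually.of_forall fun ω => ?_)
      show (⟪gc ω, x t ω - x0⟫ : ℝ) =
        ⟪gc ω - gradient f (x t ω), x t ω - x0⟫ + ⟪gradient f (x t ω), x t ω - x0⟫
      rw [← inner_add_left, sub_add_cancel]
    rw [hIeq, hsplit]
    linarith
  -- one-step inequality, pointwise
  have keyω : ∀ ω, ‖x (t + 1) ω - x0‖ ^ 2 ≤ ‖x t ω - x0‖ ^ 2 -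
      2 * η t * ⟪g t ω, x t ω - x0⟫ + η t ^ 2 * ‖g t ω‖ ^ 2 := by
    intro ω
    have hc := my_proj_contract hΘcv (hiter t ht ω) hx0
    have heq : x t ω - η t • g t ω - x0 = (x t ω - x0) - η t • g t ω := by
      rw [sub_sub, sub_sub, add_comm]
    have hexpand : ‖x t ω - η t • g t ω - x0‖ ^ 2 = ‖x t ω - x0‖ ^ 2 -
        2 * η t * ⟪g t ω, x t ω - x0⟫ + η t ^ 2 * ‖g t ω‖ ^ 2 := by
      rw [heq, norm_sub_sq_real, real_inner_smul_right, norm_smul, mul_pow,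
        Real.norm_eq_abs, sq_abs, real_inner_comm]
      ring
    linarith
  -- integrate the one-step inequality
  have hstep2 : (∫ ω, ‖x (t + 1) ω - x0‖ ^ 2 ∂μ) ≤
      (∫ ω, ‖x t ω - x0‖ ^ 2 ∂μ) - 2 * η t * (∫ ω, ⟪g t ω, x t ω - x0⟫ ∂μ) +
      η t ^ 2 * ∫ ω, ‖g t ω‖ ^ 2 ∂μ := by
    have hb1 : Integrable (fun ω => 2 * η t * ⟪g t ω, x t ω - x0⟫) μ :=
      hinng_int.const_mul _
    have hb2 : Integrable (fun ω => η t ^ 2 * ‖g t ω‖ ^ 2) μ := (hint1 t).const_mul _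
    have hb3 : Integrable (fun ω => ‖x t ω - x0‖ ^ 2 -
        2 * η t * ⟪g t ω, x t ω - x0⟫) μ := (hint5 t x0).sub hb1
    have hrhs : Integrable (fun ω => ‖x t ω - x0‖ ^ 2 -
        2 * η t * ⟪g t ω, x t ω - x0⟫ + η t ^ 2 * ‖g t ω‖ ^ 2) μ := hb3.add hb2
    have := integral_mono (hint5 (t + 1) x0) hrhs (keyω)
    rwa [integral_add hb3 hb2, integral_sub (hint5 t x0) hb1,
      integral_const_mul, integral_const_mul] at this
  -- combine everything
  set A := ∫ ω, ‖x t ω - x0‖ ^ 2 ∂μ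
  set B := ∫ ω, ‖x (t + 1) ω - x0‖ ^ 2 ∂μ
  set F := ∫ ω, f (x t ω) ∂μ
  set M := ∫ ω, ‖gradient f (x t ω)‖ ^ 2 ∂μ
  set I := ∫ ω, ⟪g t ω, x t ω - x0⟫ ∂μ
  set G2 := ∫ ω, ‖g t ω‖ ^ 2 ∂μ
  have hVG : G2 ≤ v t + m * M := hvar t ht
  have h2η : (0 : ℝ) < 2 * η t := by linarith
  have p1 : 0 ≤ 2 * η t * (I - (F - f x0 + α / 4 * A - (b t) ^ 2 / α)) :=
    mul_nonneg h2η.le (by linarith)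
  have p2 : 0 ≤ η t ^ 2 * ((v t + m * M) - G2) := mul_nonneg (sq_nonneg _) (by linarith)
  have hfin : (F - f x0 + α / 4 * A - (b t) ^ 2 / α - η t / 2 * (v t + m * M)) *
      (2 * η t) ≤ A - B := by
    have hexp : (F - f x0 + α / 4 * A - (b t) ^ 2 / α - η t / 2 * (v t + m * M)) *
        (2 * η t) = 2 * η t * I - η t ^ 2 * G2 -
        2 * η t * (I - (F - f x0 + α / 4 * A - (b t) ^ 2 / α)) -
        η t ^ 2 * ((v t + m * M) - G2) := by ring
    rw [hexp]
    linarith [hstep2, p1, p2]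
  have hdiv : F - f x0 + α / 4 * A - (b t) ^ 2 / α - η t / 2 * (v t + m * M) ≤
      (A - B) / (2 * η t) := (le_div_iff₀ h2η).mpr hfin
  linarith
end
end

section
/- Let Θ ⊂ ℝ^d be a nonempty compact convex set, let f : ℝ^d → ℝ be α-strongly convex (α > 0) with sup_{x∈Θ} ‖∇f(x)‖ ≤ G, and consider the projected iteration x_{t+1} = Proj_Θ(x_t − η_t g_t) with step sizes η_t = 2/(αt) and x₁ ∈ Θ. Assume there are nonnegative reals b_t, v_t and m ≥ 0 such that for every t ≥ 1, almost surely ‖E[g_t | x_t] − ∇f(x_t)‖ ≤ b_t and E[‖g_t‖²] ≤ v_t + m·E[‖∇f(x_t)‖²]. Then for x̄_T = (1/T)·Σ_{t=1}^{T} x_t, one has E[f(x̄_T)] − min_{x∈Θ} f(x) ≤ m G² log(eT)/(α T) + (1/(α T))·Σ_{t=1}^{T}(v_t/t + b_t²). -/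
open MeasureTheory ProbabilityTheory Real
open scoped RealInnerProductSpace ENNReal NNReal BigOperators

noncomputable section

lemma coord_abs_le {d : ℕ} (a : Euc d) (i : Fin d) : |a i| ≤ ‖a‖ := by
  rw [EuclideanSpace.norm_eq]
  rw [show |a i| = Real.sqrt (‖a i‖ ^ 2) by rw [Real.sqrt_sq_eq_abs]; simp]
  apply Real.sqrt_le_sqrt
  exact Finset.single_le_sum (f := fun j => ‖a j‖ ^ 2) (fun j _ => by positivity)
    (Finset.mem_univ i)

lemma euc_inner_sum {d : ℕ} (a b : Euc d) : ⟪a, b⟫ = ∑ i, a i * b i := by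
  simp [PiLp.inner_apply, RCLike.inner_apply, mul_comm]

lemma proj_sq_le {d : ℕ} {Θ : Set (Euc d)} (hcv : Convex ℝ Θ) {u p z : Euc d}
    (hp : p ∈ Θ ∧ ∀ w ∈ Θ, ‖p - u‖ ≤ ‖w - u‖) (hz : z ∈ Θ) :
    ‖p - z‖ ^ 2 ≤ ‖u - z‖ ^ 2 := by
  have hne : Nonempty Θ := ⟨⟨p, hp.1⟩⟩
  have hbdd : BddBelow (Set.range fun w : Θ => ‖u - (w : Euc d)‖) := by
    refine ⟨0, ?_⟩
    rintro _ ⟨w, rfl⟩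
    positivity
  have hinf : ‖u - p‖ = ⨅ w : Θ, ‖u - (w : Euc d)‖ := by
    apply le_antisymm
    · refine le_ciInf fun w => ?_
      rw [norm_sub_rev, norm_sub_rev u (w : Euc d)]
      exact hp.2 w w.2
    · exact ciInf_le hbdd ⟨p, hp.1⟩
  have key : ⟪u - p, z - p⟫ ≤ 0 :=
    (norm_eq_iInf_iff_real_inner_le_zero hcv hp.1).1 hinf z hz
  have hexp : ‖u - z‖ ^ 2 = ‖u - p‖ ^ 2 - 2 * ⟪u - p, z - p⟫ + ‖z - p‖ ^ 2 := by
    rw [show u - z = (u - p) - (z - p) by abel, norm_sub_sq_real]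
  have h2 : ‖p - z‖ ^ 2 = ‖z - p‖ ^ 2 := by rw [norm_sub_rev]
  nlinarith [sq_nonneg ‖u - p‖]

lemma condexp_coord {d : ℕ} {Ω : Type} {m : MeasurableSpace Ω} [m0 : MeasurableSpace Ω]
    (μ : Measure Ω) [IsProbabilityMeasure μ] (hm : m ≤ m0)
    {g : Ω → Euc d} (hg : Integrable g μ) (i : Fin d) :
    (fun ω => (μ[g|m]) ω i) =ᵐ[μ] μ[(fun ω => g ω i)|m] := by
  have hsf : SigmaFinite (μ.trim hm) := inferInstance
  have hgc : Integrable (μ[g|m]) μ := integrable_condExp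
  have hgi : Integrable (fun ω => g ω i) μ :=
    (EuclideanSpace.proj (𝕜 := ℝ) i).integrable_comp (μ := μ) hg
  refine ae_eq_condExp_of_forall_setIntegral_eq hm hgi ?_ ?_ ?_
  · intro s _ _
    exact ((EuclideanSpace.proj (𝕜 := ℝ) i).integrable_comp (μ := μ) hgc).integrableOn
  · intro s hs hμs
    have h1 : ∫ ω in s, (μ[g|m]) ω i ∂μ
        = (EuclideanSpace.proj (𝕜 := ℝ) i) (∫ ω in s, (μ[g|m]) ω ∂μ) :=
      ((EuclideanSpace.proj (𝕜 := ℝ) i).integral_comp_comm (μ := μ.restrict s) hgc.integrableOn)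
    have h2 : ∫ ω in s, g ω i ∂μ = (EuclideanSpace.proj (𝕜 := ℝ) i) (∫ ω in s, g ω ∂μ) :=
      ((EuclideanSpace.proj (𝕜 := ℝ) i).integral_comp_comm (μ := μ.restrict s) hg.integrableOn)
    rw [h1, h2, setIntegral_condExp hm hg hs]
  · exact StronglyMeasurable.aestronglyMeasurable
      ((EuclideanSpace.proj (𝕜 := ℝ) i).continuous.comp_stronglyMeasurable
        stronglyMeasurable_condExp)

lemma integral_inner_condexp {d : ℕ} {Ω : Type} {m : MeasurableSpace Ω}
    [m0 : MeasurableSpace Ω] (μ : Measure Ω) [IsProbabilityMeasure μ] (hm : m ≤ m0)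
    {g h : Ω → Euc d} (hg : Integrable g μ) (hh : StronglyMeasurable[m] h)
    {C : ℝ} (hC : ∀ ω, ‖h ω‖ ≤ C) :
    ∫ ω, ⟪g ω, h ω⟫ ∂μ = ∫ ω, ⟪(μ[g|m]) ω, h ω⟫ ∂μ := by
  have hsf : SigmaFinite (μ.trim hm) := inferInstance
  have hC0 : 0 ≤ C := by
    have hne : Nonempty Ω := by
      by_contra hne
      simp only [not_nonempty_iff] at hne
      have h1 : μ Set.univ = 1 := measure_univ
      have h0 : (Set.univ : Set Ω) = ∅ := Set.univ_eq_empty_iff.mpr hne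
      rw [h0, measure_empty] at h1
      exact zero_ne_one h1
    exact le_trans (norm_nonneg _) (hC (Classical.arbitrary Ω))
  have hhi : ∀ i, StronglyMeasurable[m] (fun ω => h ω i) := fun i =>
    (EuclideanSpace.proj (𝕜 := ℝ) i).continuous.comp_stronglyMeasurable hh
  have hbound : ∀ i (ω : Ω), |h ω i| ≤ C := fun i ω => le_trans (coord_abs_le _ _) (hC ω)
  have hgc : Integrable (μ[g|m]) μ := integrable_condExp
  have hint : ∀ (G : Ω → Euc d), Integrable G μ → ∀ i,
      Integrable (fun ω => h ω i * G ω i) μ := by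
    intro G hG i
    refine Integrable.mono' (hG.norm.const_mul C) ?_ ?_
    · exact ((hhi i).mono hm).aestronglyMeasurable.mul
        ((EuclideanSpace.proj (𝕜 := ℝ) i).continuous.comp_aestronglyMeasurable
          hG.aestronglyMeasurable)
    · filter_upwards with ω
      rw [Real.norm_eq_abs, abs_mul]
      exact mul_le_mul (hbound i ω) (coord_abs_le _ _) (abs_nonneg _) hC0
  have hGi : ∀ i, Integrable (fun ω => g ω i) μ := fun i =>
    (EuclideanSpace.proj (𝕜 := ℝ) i).integrable_comp (μ := μ) hg
  have key : ∀ i : Fin d, ∫ ω, h ω i * g ω i ∂μ = ∫ ω, h ω i * (μ[g|m]) ω i ∂μ := by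
    intro i
    have e1 : μ[(fun ω => h ω i) * (fun ω => g ω i)|m]
        =ᵐ[μ] (fun ω => h ω i) * μ[(fun ω => g ω i)|m] :=
      condExp_mul_of_stronglyMeasurable_left (hhi i) (hint g hg i) (hGi i)
    have e2 : ∫ ω, h ω i * g ω i ∂μ
        = ∫ ω, (μ[(fun ω => h ω i) * (fun ω => g ω i)|m]) ω ∂μ :=
      (integral_condExp hm).symm
    rw [e2, integral_congr_ae e1]
    refine integral_congr_ae ?_
    filter_upwards [condexp_coord μ hm hg i] with ω hω
    simp only [Pi.mul_apply]
    rw [← hω]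
  calc ∫ ω, ⟪g ω, h ω⟫ ∂μ = ∫ ω, ∑ i, h ω i * g ω i ∂μ := by
        congr 1
    _ = ∑ i, ∫ ω, h ω i * g ω i ∂μ := integral_finset_sum _ fun i _ => hint g hg i
    _ = ∑ i, ∫ ω, h ω i * (μ[g|m]) ω i ∂μ := Finset.sum_congr rfl fun i _ => key i
    _ = ∫ ω, ∑ i, h ω i * (μ[g|m]) ω i ∂μ := (integral_finset_sum _ fun i _ => hint _ hgc i).symm
    _ = ∫ ω, ⟪(μ[g|m]) ω, h ω⟫ ∂μ := by
        congr 1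

set_option maxHeartbeats 2000000 in
/-- regret of averaged projected SGD under strong convexity.
On a compact convex `Θ`, with `η_t = 2/(αt)` and `‖∇f‖ ≤ G` on `Θ`, the averaged
iterate `x̄_T = (1/T)Σ_{t=1}^T x_t` satisfies
`E[f(x̄_T)] − min_Θ f ≤ mG²log(eT)/(αT) + (1/(αT))·Σ_{t=1}^T (v_t/t + b_t²)`. -/
theorem averaged_projected_sgd_strongly_convex {d : ℕ}
    {Ω : Type} [MeasurableSpace Ω] (μ : Measure Ω) [IsProbabilityMeasure μ]
    (Θ : Set (Euc d)) (hΘne : Θ.Nonempty) (hΘcp : IsCompact Θ) (hΘcv : Convex ℝ Θ)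
    (α G : ℝ) (hα : 0 < α) (hG : 0 ≤ G) (f : Euc d → ℝ) (hf : Differentiable ℝ f)
    (hsc : ∀ u w : Euc d, f w + ⟪gradient f w, u - w⟫ + α / 2 * ‖u - w‖ ^ 2 ≤ f u)
    (hgradG : ∀ y ∈ Θ, ‖gradient f y‖ ≤ G)
    (η : ℕ → ℝ) (hηdef : ∀ t, 1 ≤ t → η t = 2 / (α * t))
    (x g : ℕ → Ω → Euc d)
    (hxm : ∀ t, Measurable (x t)) (hgm : ∀ t, Measurable (g t))
    (hx1 : ∀ ω, x 1 ω ∈ Θ)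
    (hiter : ∀ t, 1 ≤ t → ∀ ω, IsProj Θ (x t ω - η t • g t ω) (x (t + 1) ω))
    (b v : ℕ → ℝ) (m : ℝ) (hb : ∀ t, 0 ≤ b t) (hv : ∀ t, 0 ≤ v t) (hm : 0 ≤ m)
    (hbias : ∀ t, 1 ≤ t → ∀ᵐ ω ∂μ,
      ‖(μ[g t | MeasurableSpace.comap (x t) inferInstance]) ω - gradient f (x t ω)‖ ≤ b t)
    (hvar : ∀ t, 1 ≤ t →
      (∫ ω, ‖g t ω‖ ^ 2 ∂μ) ≤ v t + m * ∫ ω, ‖gradient f (x t ω)‖ ^ 2 ∂μ)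
    (hint1 : ∀ t, Integrable (fun ω => ‖g t ω‖ ^ 2) μ)
    (hint2 : ∀ t, Integrable (fun ω => ‖gradient f (x t ω)‖ ^ 2) μ)
    (hint3 : ∀ t, Integrable (g t) μ)
    (hint4 : ∀ t, Integrable (fun ω => f (x t ω)) μ)
    (T : ℕ) (hT : 1 ≤ T)
    (hint5 : Integrable (fun ω => f ((T : ℝ)⁻¹ • ∑ t ∈ Finset.Icc 1 T, x t ω)) μ) :
    (∫ ω, f ((T : ℝ)⁻¹ • ∑ t ∈ Finset.Icc 1 T, x t ω) ∂μ) - sInf (f '' Θ) ≤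
      m * G ^ 2 * Real.log (Real.exp 1 * T) / (α * T) +
        1 / (α * T) * ∑ t ∈ Finset.Icc 1 T, (v t / t + (b t) ^ 2) := by
  -- minimizer
  obtain ⟨xs, hxsΘ, hxsmin⟩ := hΘcp.exists_isMinOn hΘne (hf.continuous.continuousOn)
  have hmin : sInf (f '' Θ) = f xs := by
    refine IsLeast.csInf_eq ⟨⟨xs, hxsΘ, rfl⟩, ?_⟩
    rintro y ⟨z, hz, rfl⟩
    exact isMinOn_iff.mp hxsmin z hz
  -- boundedness
  obtain ⟨R, hR⟩ := (Metric.isBounded_iff_subset_closedBall 0).mp hΘcp.isBounded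
  have hRy : ∀ y ∈ Θ, ‖y‖ ≤ R := fun y hy => by
    simpa [Metric.mem_closedBall, dist_zero_right] using hR hy
  have hD : ∀ y ∈ Θ, ‖y - xs‖ ≤ 2 * R := fun y hy => by
    have := norm_sub_le y xs
    have h1 := hRy y hy
    have h2 := hRy xs hxsΘ
    linarith
  -- membership
  have hmem : ∀ t, 1 ≤ t → ∀ ω, x t ω ∈ Θ := by
    intro t
    induction t with
    | zero => omega
    | succ n ih =>
      intro _ ω
      rcases Nat.eq_zero_or_pos n with h | h
      · subst h; exact hx1 ω
      · exact (hiter n h ω).1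
  -- integrability of squared distances
  have Isq : ∀ s, 1 ≤ s → Integrable (fun ω => ‖x s ω - xs‖ ^ 2) μ := by
    intro s hs
    refine Integrable.mono' (integrable_const ((2 * R) ^ 2))
      ((((hxm s).sub measurable_const).norm.pow_const 2).aestronglyMeasurable) ?_
    filter_upwards with ω
    rw [Real.norm_eq_abs, abs_of_nonneg (by positivity)]
    exact pow_le_pow_left₀ (norm_nonneg _) (hD _ (hmem s hs ω)) 2
  have hq_nonneg : ∀ s, 0 ≤ ∫ ω, ‖x s ω - xs‖ ^ 2 ∂μ :=
    fun s => integral_nonneg fun ω => by positivity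
  -- main per-step bound
  have step : ∀ i, i < T →
      (∫ ω, f (x (i + 1) ω) ∂μ) - f xs ≤
        (α * (i : ℝ) / 4 * (∫ ω, ‖x (i + 1) ω - xs‖ ^ 2 ∂μ)
          - α * ((i + 1 : ℕ) : ℝ) / 4 * (∫ ω, ‖x (i + 2) ω - xs‖ ^ 2 ∂μ))
        + (1 / α) * ((b (i + 1)) ^ 2 + v (i + 1) / ((i + 1 : ℕ) : ℝ))
        + (m * G ^ 2 / α) * (((i + 1 : ℕ) : ℝ))⁻¹ := by
    intro i _
    have ht : 1 ≤ i + 1 := Nat.succ_le_succ (Nat.zero_le i)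
    set c : ℝ := ((i + 1 : ℕ) : ℝ) with hcdef
    have hc1 : (1 : ℝ) ≤ c := by rw [hcdef]; exact_mod_cast ht
    have hc0 : (0 : ℝ) < c := lt_of_lt_of_le one_pos hc1
    have hαc : (0 : ℝ) < α * c := by positivity
    have hηt : η (i + 1) = 2 / (α * c) := hηdef (i + 1) ht
    -- pointwise descent inequality
    have P : ∀ ω, ‖x (i + 2) ω - xs‖ ^ 2 ≤
        ‖x (i + 1) ω - xs‖ ^ 2 - 2 * η (i + 1) * ⟪g (i + 1) ω, x (i + 1) ω - xs⟫
          + (η (i + 1)) ^ 2 * ‖g (i + 1) ω‖ ^ 2 := by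
      intro ω
      have hp : x (i + 2) ω ∈ Θ ∧ ∀ z ∈ Θ,
          ‖x (i + 2) ω - (x (i + 1) ω - η (i + 1) • g (i + 1) ω)‖ ≤
            ‖z - (x (i + 1) ω - η (i + 1) • g (i + 1) ω)‖ := hiter (i + 1) ht ω
      have h1 := proj_sq_le hΘcv hp hxsΘ
      have hexp : ‖(x (i + 1) ω - η (i + 1) • g (i + 1) ω) - xs‖ ^ 2 =
          ‖x (i + 1) ω - xs‖ ^ 2 - 2 * η (i + 1) * ⟪g (i + 1) ω, x (i + 1) ω - xs⟫
            + (η (i + 1)) ^ 2 * ‖g (i + 1) ω‖ ^ 2 := by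
        rw [show (x (i + 1) ω - η (i + 1) • g (i + 1) ω) - xs
            = (x (i + 1) ω - xs) - η (i + 1) • g (i + 1) ω by abel,
          norm_sub_sq_real, real_inner_smul_right, norm_smul,
          real_inner_comm (x (i + 1) ω - xs) (g (i + 1) ω), mul_pow]
        simp only [Real.norm_eq_abs, sq_abs]
        ring
      rw [hexp] at h1
      exact h1
    -- integrability of inner products
    have hSMh : StronglyMeasurable[MeasurableSpace.comap (x (i + 1)) inferInstance]
        (fun ω => x (i + 1) ω - xs) :=
      ((Measurable.of_comap_le le_rfl).sub measurable_const).stronglyMeasurable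
    have Iinner : ∀ (Gf : Ω → Euc d), Integrable Gf μ →
        Integrable (fun ω => ⟪Gf ω, x (i + 1) ω - xs⟫) μ := by
      intro Gf hGf
      refine Integrable.mono' (hGf.norm.mul_const (2 * R))
        (hGf.aestronglyMeasurable.inner
          (((hxm (i + 1)).sub measurable_const).aestronglyMeasurable)) ?_
      filter_upwards with ω
      rw [Real.norm_eq_abs]
      exact (abs_real_inner_le_norm _ _).trans
        (mul_le_mul_of_nonneg_left (hD _ (hmem _ ht ω)) (norm_nonneg _))
    have Ii := Iinner (g (i + 1)) (hint3 (i + 1))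
    have Ic := Iinner (μ[g (i + 1)|MeasurableSpace.comap (x (i + 1)) inferInstance])
      integrable_condExp
    -- integral of descent inequality
    have hq : (∫ ω, ‖x (i + 2) ω - xs‖ ^ 2 ∂μ) ≤
        (∫ ω, ‖x (i + 1) ω - xs‖ ^ 2 ∂μ)
          - 2 * η (i + 1) * (∫ ω, ⟪g (i + 1) ω, x (i + 1) ω - xs⟫ ∂μ)
          + (η (i + 1)) ^ 2 * (∫ ω, ‖g (i + 1) ω‖ ^ 2 ∂μ) := by
      have hsub : Integrable (fun ω =>
          ‖x (i + 1) ω - xs‖ ^ 2 - 2 * η (i + 1) * ⟪g (i + 1) ω, x (i + 1) ω - xs⟫) μ := by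
        exact (Isq (i + 1) ht).sub (Ii.const_mul _)
      have hCc : Integrable (fun ω => (η (i + 1)) ^ 2 * ‖g (i + 1) ω‖ ^ 2) μ := by
        exact (hint1 (i + 1)).const_mul _
      have hInt : Integrable (fun ω =>
          ‖x (i + 1) ω - xs‖ ^ 2 - 2 * η (i + 1) * ⟪g (i + 1) ω, x (i + 1) ω - xs⟫
            + (η (i + 1)) ^ 2 * ‖g (i + 1) ω‖ ^ 2) μ := hsub.add hCc
      calc (∫ ω, ‖x (i + 2) ω - xs‖ ^ 2 ∂μ) ≤ ∫ ω,
            (‖x (i + 1) ω - xs‖ ^ 2 - 2 * η (i + 1) * ⟪g (i + 1) ω, x (i + 1) ω - xs⟫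
              + (η (i + 1)) ^ 2 * ‖g (i + 1) ω‖ ^ 2) ∂μ :=
          integral_mono (Isq (i + 2) (by omega)) hInt P
        _ = _ := by
          rw [integral_add hsub hCc,
            integral_sub (Isq (i + 1) ht) (Ii.const_mul _),
            integral_const_mul, integral_const_mul]
    -- conditional expectation pairing
    have hpair : (∫ ω, ⟪g (i + 1) ω, x (i + 1) ω - xs⟫ ∂μ) =
        ∫ ω, ⟪(μ[g (i + 1)|MeasurableSpace.comap (x (i + 1)) inferInstance]) ω,
          x (i + 1) ω - xs⟫ ∂μ :=
      integral_inner_condexp μ ((hxm (i + 1)).comap_le) (hint3 (i + 1)) hSMh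
        (C := 2 * R) (fun ω => hD _ (hmem _ ht ω))
    -- lower bound using bias + strong convexity
    have hAE : ∀ᵐ ω ∂μ,
        f (x (i + 1) ω) - f xs + α / 4 * ‖x (i + 1) ω - xs‖ ^ 2 - (b (i + 1)) ^ 2 / α ≤
          ⟪(μ[g (i + 1)|MeasurableSpace.comap (x (i + 1)) inferInstance]) ω,
            x (i + 1) ω - xs⟫ := by
      filter_upwards [hbias (i + 1) ht] with ω hω
      set w := x (i + 1) ω with hw
      set gg := (μ[g (i + 1)|MeasurableSpace.comap (x (i + 1)) inferInstance]) ω with hgg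
      set gr := gradient f w with hgr
      have hs1 := hsc xs w
      have h3 : ⟪gr, xs - w⟫ = -⟪gr, w - xs⟫ := by
        rw [show xs - w = -(w - xs) by abel, inner_neg_right]
      have h4 : ‖xs - w‖ = ‖w - xs‖ := norm_sub_rev _ _
      have hsub : ⟪gg - gr, w - xs⟫ = ⟪gg, w - xs⟫ - ⟪gr, w - xs⟫ := inner_sub_left _ _ _
      have h2 : -(b (i + 1) * ‖w - xs‖) ≤ ⟪gg - gr, w - xs⟫ := by
        have habs : |⟪gg - gr, w - xs⟫| ≤ b (i + 1) * ‖w - xs‖ :=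
          (abs_real_inner_le_norm _ _).trans
            (mul_le_mul_of_nonneg_right hω (norm_nonneg _))
        linarith [neg_abs_le ⟪gg - gr, w - xs⟫, habs]
      have young : b (i + 1) * ‖w - xs‖ ≤ (b (i + 1)) ^ 2 / α + α / 4 * ‖w - xs‖ ^ 2 := by
        rw [← sub_nonneg]
        have hid : (b (i + 1)) ^ 2 / α + α / 4 * ‖w - xs‖ ^ 2 - b (i + 1) * ‖w - xs‖
            = (α * ‖w - xs‖ / 2 - b (i + 1)) ^ 2 / α := by
          field_simp
          ring
        rw [hid]
        positivity
      rw [h3, h4] at hs1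
      linarith
    have hA2 : (∫ ω, f (x (i + 1) ω) ∂μ) - f xs
        + α / 4 * (∫ ω, ‖x (i + 1) ω - xs‖ ^ 2 ∂μ) - (b (i + 1)) ^ 2 / α ≤
        ∫ ω, ⟪(μ[g (i + 1)|MeasurableSpace.comap (x (i + 1)) inferInstance]) ω,
          x (i + 1) ω - xs⟫ ∂μ := by
      have hIL1 : Integrable (fun ω => f (x (i + 1) ω) - f xs) μ := by
        exact (hint4 (i + 1)).sub (integrable_const _)
      have hIL2 : Integrable (fun ω => α / 4 * ‖x (i + 1) ω - xs‖ ^ 2) μ := by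
        exact (Isq (i + 1) ht).const_mul _
      have hIL3 : Integrable (fun ω =>
          f (x (i + 1) ω) - f xs + α / 4 * ‖x (i + 1) ω - xs‖ ^ 2) μ := hIL1.add hIL2
      have hIL : Integrable (fun ω =>
          f (x (i + 1) ω) - f xs + α / 4 * ‖x (i + 1) ω - xs‖ ^ 2 - (b (i + 1)) ^ 2 / α) μ :=
        hIL3.sub (integrable_const _)
      have := integral_mono_ae hIL Ic hAE
      rw [integral_sub hIL3 (integrable_const _),
        integral_add hIL1 hIL2,
        integral_sub (hint4 (i + 1)) (integrable_const _), integral_const_mul,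
        integral_const, integral_const] at this
      simpa [measure_univ] using this
    -- variance bound
    have hVb : (∫ ω, ‖g (i + 1) ω‖ ^ 2 ∂μ) ≤ v (i + 1) + m * G ^ 2 := by
      have hgb : (∫ ω, ‖gradient f (x (i + 1) ω)‖ ^ 2 ∂μ) ≤ G ^ 2 := by
        calc (∫ ω, ‖gradient f (x (i + 1) ω)‖ ^ 2 ∂μ) ≤ ∫ _ω, G ^ 2 ∂μ :=
            integral_mono (hint2 (i + 1)) (integrable_const _) fun ω =>
              pow_le_pow_left₀ (norm_nonneg _) (hgradG _ (hmem _ ht ω)) 2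
          _ = G ^ 2 := by simp [measure_univ]
      exact (hvar (i + 1) ht).trans
        (add_le_add_right (mul_le_mul_of_nonneg_left hgb hm) _)
    -- arithmetic
    set q1 := ∫ ω, ‖x (i + 1) ω - xs‖ ^ 2 ∂μ
    set q2 := ∫ ω, ‖x (i + 2) ω - xs‖ ^ 2 ∂μ
    set A := ∫ ω, ⟪g (i + 1) ω, x (i + 1) ω - xs⟫ ∂μ
    set V := ∫ ω, ‖g (i + 1) ω‖ ^ 2 ∂μ
    set F1 := ∫ ω, f (x (i + 1) ω) ∂μ
    rw [hηt] at hq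
    rw [← hpair] at hA2
    have hαne : α ≠ 0 := ne_of_gt hα
    have hcne : c ≠ 0 := ne_of_gt hc0
    have e1 : α * c / 4 * q2 ≤ α * c / 4 * q1 - A + V / (α * c) := by
      have hmul := mul_le_mul_of_nonneg_left hq (le_of_lt (by positivity : (0:ℝ) < α * c / 4))
      have hid : α * c / 4 * (q1 - 2 * (2 / (α * c)) * A + (2 / (α * c)) ^ 2 * V)
          = α * c / 4 * q1 - A + V / (α * c) := by
        field_simp
        ring
      linarith [hid ▸ hmul]
    have e3 : V / (α * c) ≤ (v (i + 1) + m * G ^ 2) / (α * c) := by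
      rw [div_le_div_iff₀ hαc hαc]
      exact mul_le_mul_of_nonneg_right hVb (le_of_lt hαc)
    have id4 : α * (i : ℝ) / 4 * q1 = α * c / 4 * q1 - α / 4 * q1 := by
      have : (i : ℝ) = c - 1 := by rw [hcdef]; push_cast; ring
      rw [this]; ring
    have id5 : (1 / α) * ((b (i + 1)) ^ 2 + v (i + 1) / c) + (m * G ^ 2 / α) * c⁻¹
        = (b (i + 1)) ^ 2 / α + (v (i + 1) + m * G ^ 2) / (α * c) := by
      field_simp
      ring
    linarith [e1, hA2, e3, id4, id5]
  -- sum the step bounds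
  have hsum : (∑ i ∈ Finset.range T, ((∫ ω, f (x (i + 1) ω) ∂μ) - f xs)) ≤
      (1 / α) * (∑ i ∈ Finset.range T, ((b (i + 1)) ^ 2 + v (i + 1) / ((i + 1 : ℕ) : ℝ)))
      + (m * G ^ 2 / α) * (∑ i ∈ Finset.range T, (((i + 1 : ℕ) : ℝ))⁻¹) := by
    have htel_le : (∑ i ∈ Finset.range T,
        (α * (i : ℝ) / 4 * (∫ ω, ‖x (i + 1) ω - xs‖ ^ 2 ∂μ)
          - α * ((i + 1 : ℕ) : ℝ) / 4 * (∫ ω, ‖x (i + 2) ω - xs‖ ^ 2 ∂μ))) ≤ 0 := by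
      have heq : (∑ i ∈ Finset.range T,
          (α * (i : ℝ) / 4 * (∫ ω, ‖x (i + 1) ω - xs‖ ^ 2 ∂μ)
            - α * ((i + 1 : ℕ) : ℝ) / 4 * (∫ ω, ‖x (i + 2) ω - xs‖ ^ 2 ∂μ)))
          = (fun s : ℕ => α * (s : ℝ) / 4 * (∫ ω, ‖x (s + 1) ω - xs‖ ^ 2 ∂μ)) 0
            - (fun s : ℕ => α * (s : ℝ) / 4 * (∫ ω, ‖x (s + 1) ω - xs‖ ^ 2 ∂μ)) T := by
        rw [← Finset.sum_range_sub'
          (fun s : ℕ => α * (s : ℝ) / 4 * (∫ ω, ‖x (s + 1) ω - xs‖ ^ 2 ∂μ)) T]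
      rw [heq]
      simp only [Nat.cast_zero, mul_zero, zero_mul, zero_div, zero_sub]
      have h1 := hq_nonneg (T + 1)
      have hTc : (0 : ℝ) ≤ (T : ℝ) := Nat.cast_nonneg T
      have h2 : (0:ℝ) ≤ α * (T : ℝ) / 4 * (∫ ω, ‖x (T + 1) ω - xs‖ ^ 2 ∂μ) := by
        have : (0:ℝ) ≤ α * (T : ℝ) / 4 := by positivity
        exact mul_nonneg this h1
      linarith
    calc (∑ i ∈ Finset.range T, ((∫ ω, f (x (i + 1) ω) ∂μ) - f xs))
        ≤ ∑ i ∈ Finset.range T,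
          ((α * (i : ℝ) / 4 * (∫ ω, ‖x (i + 1) ω - xs‖ ^ 2 ∂μ)
            - α * ((i + 1 : ℕ) : ℝ) / 4 * (∫ ω, ‖x (i + 2) ω - xs‖ ^ 2 ∂μ))
          + (1 / α) * ((b (i + 1)) ^ 2 + v (i + 1) / ((i + 1 : ℕ) : ℝ))
          + (m * G ^ 2 / α) * (((i + 1 : ℕ) : ℝ))⁻¹) :=
          Finset.sum_le_sum fun i hi => step i (Finset.mem_range.mp hi)
      _ = (∑ i ∈ Finset.range T,
            (α * (i : ℝ) / 4 * (∫ ω, ‖x (i + 1) ω - xs‖ ^ 2 ∂μ)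
              - α * ((i + 1 : ℕ) : ℝ) / 4 * (∫ ω, ‖x (i + 2) ω - xs‖ ^ 2 ∂μ)))
          + ((1 / α) * (∑ i ∈ Finset.range T,
              ((b (i + 1)) ^ 2 + v (i + 1) / ((i + 1 : ℕ) : ℝ)))
            + (m * G ^ 2 / α) * (∑ i ∈ Finset.range T, (((i + 1 : ℕ) : ℝ))⁻¹)) := by
          rw [Finset.mul_sum, Finset.mul_sum, ← Finset.sum_add_distrib,
            ← Finset.sum_add_distrib]
          exact Finset.sum_congr rfl fun i _ => by ring
      _ ≤ _ := by linarith [htel_le]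
  -- harmonic bound
  have hharm : (∑ i ∈ Finset.range T, (((i + 1 : ℕ) : ℝ))⁻¹) ≤ 1 + Real.log T := by
    have h1 : (∑ i ∈ Finset.range T, (((i + 1 : ℕ) : ℝ))⁻¹) = (harmonic T : ℝ) := by
      rw [harmonic_eq_sum_Icc]
      push_cast
      rw [← Finset.Ico_add_one_right_eq_Icc, Finset.sum_Ico_eq_sum_range]
      simp [add_comm]
    rw [h1]
    exact harmonic_le_one_add_log T
  -- Jensen
  have hJ : (T : ℝ) * (∫ ω, f ((T : ℝ)⁻¹ • ∑ t ∈ Finset.Icc 1 T, x t ω) ∂μ) ≤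
      ∑ t ∈ Finset.Icc 1 T, ∫ ω, f (x t ω) ∂μ := by
    have hTne : (T : ℝ) ≠ 0 := by positivity
    have ptw : ∀ ω, (T : ℝ) * f ((T : ℝ)⁻¹ • ∑ t ∈ Finset.Icc 1 T, x t ω) ≤
        ∑ t ∈ Finset.Icc 1 T, f (x t ω) := by
      intro ω
      set w := (T : ℝ)⁻¹ • ∑ t ∈ Finset.Icc 1 T, x t ω with hwdef
      have hsum0 : (∑ t ∈ Finset.Icc 1 T, (x t ω - w)) = 0 := by
        rw [Finset.sum_sub_distrib, Finset.sum_const, Nat.card_Icc]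
        simp only [Nat.add_sub_cancel]
        rw [hwdef, ← Nat.cast_smul_eq_nsmul ℝ, smul_smul, mul_inv_cancel₀ hTne, one_smul]
        simp
      have hlow : ∀ t ∈ Finset.Icc 1 T,
          f w + ⟪gradient f w, x t ω - w⟫ ≤ f (x t ω) := by
        intro t _
        have := hsc (x t ω) w
        nlinarith [sq_nonneg ‖x t ω - w‖, mul_nonneg (le_of_lt hα) (sq_nonneg ‖x t ω - w‖)]
      calc (T : ℝ) * f w
          = ∑ t ∈ Finset.Icc 1 T, (f w + ⟪gradient f w, x t ω - w⟫) := by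
            rw [Finset.sum_add_distrib, Finset.sum_const, Nat.card_Icc, ← inner_sum, hsum0,
              inner_zero_right]
            simp only [Nat.add_sub_cancel, nsmul_eq_mul, add_zero]
        _ ≤ ∑ t ∈ Finset.Icc 1 T, f (x t ω) := Finset.sum_le_sum hlow
    have hIsum : Integrable (fun ω => ∑ t ∈ Finset.Icc 1 T, f (x t ω)) μ :=
      integrable_finset_sum _ fun t _ => hint4 t
    have := integral_mono (hint5.const_mul (T : ℝ)) hIsum ptw
    rwa [integral_const_mul, integral_finset_sum _ fun t _ => hint4 t] at this
  -- convert Icc-sums to range-sums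
  have hconv : ∀ (F : ℕ → ℝ), (∑ t ∈ Finset.Icc 1 T, F t) = ∑ i ∈ Finset.range T, F (i + 1) := by
    intro F
    rw [← Finset.Ico_add_one_right_eq_Icc, Finset.sum_Ico_eq_sum_range]
    simp [add_comm]
  -- final assembly
  have hTpos : (0 : ℝ) < (T : ℝ) := by exact_mod_cast hT
  have hlog : Real.log (Real.exp 1 * T) = 1 + Real.log T := by
    rw [Real.log_mul (Real.exp_ne_zero 1) (ne_of_gt hTpos), Real.log_exp]
  set I := ∫ ω, f ((T : ℝ)⁻¹ • ∑ t ∈ Finset.Icc 1 T, x t ω) ∂μ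
  have hS1 : (∑ t ∈ Finset.Icc 1 T, ∫ ω, f (x t ω) ∂μ) - (T : ℝ) * f xs ≤
      (1 / α) * (∑ t ∈ Finset.Icc 1 T, ((b t) ^ 2 + v t / (t : ℝ)))
      + (m * G ^ 2 / α) * (1 + Real.log T) := by
    have h1 : (∑ i ∈ Finset.range T, ((∫ ω, f (x (i + 1) ω) ∂μ) - f xs)) =
        (∑ t ∈ Finset.Icc 1 T, ∫ ω, f (x t ω) ∂μ) - (T : ℝ) * f xs := by
      rw [Finset.sum_sub_distrib, Finset.sum_const, Finset.card_range,
        hconv (fun t => ∫ ω, f (x t ω) ∂μ)]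
      simp [nsmul_eq_mul]
    have h2 : (∑ t ∈ Finset.Icc 1 T, ((b t) ^ 2 + v t / (t : ℝ))) =
        ∑ i ∈ Finset.range T, ((b (i + 1)) ^ 2 + v (i + 1) / ((i + 1 : ℕ) : ℝ)) :=
      hconv _
    rw [← h1, h2]
    have hmono : (m * G ^ 2 / α) * (∑ i ∈ Finset.range T, (((i + 1 : ℕ) : ℝ))⁻¹) ≤
        (m * G ^ 2 / α) * (1 + Real.log T) :=
      mul_le_mul_of_nonneg_left hharm (by positivity)
    linarith [hsum]
  have hfinal : I - f xs ≤
      ((1 / α) * (∑ t ∈ Finset.Icc 1 T, ((b t) ^ 2 + v t / (t : ℝ)))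
        + (m * G ^ 2 / α) * (1 + Real.log T)) / (T : ℝ) := by
    rw [le_div_iff₀ hTpos]
    have : (T : ℝ) * I ≤ (T : ℝ) * f xs
        + ((1 / α) * (∑ t ∈ Finset.Icc 1 T, ((b t) ^ 2 + v t / (t : ℝ)))
          + (m * G ^ 2 / α) * (1 + Real.log T)) := by linarith [hJ, hS1]
    nlinarith [this]
  rw [hmin]
  have hrhs : ((1 / α) * (∑ t ∈ Finset.Icc 1 T, ((b t) ^ 2 + v t / (t : ℝ)))
      + (m * G ^ 2 / α) * (1 + Real.log T)) / (T : ℝ)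
      = m * G ^ 2 * Real.log (Real.exp 1 * T) / (α * T) +
        1 / (α * T) * ∑ t ∈ Finset.Icc 1 T, (v t / t + (b t) ^ 2) := by
    rw [hlog]
    have hsumeq : (∑ t ∈ Finset.Icc 1 T, ((b t) ^ 2 + v t / (t : ℝ)))
        = ∑ t ∈ Finset.Icc 1 T, (v t / t + (b t) ^ 2) :=
      Finset.sum_congr rfl fun t _ => by ring
    rw [hsumeq]
    field_simp
    ring
  rw [← hrhs]
  exact hfinal
end
end

section
/- Let N ≥ 1, let a_i ≥ 0 and p_i ∈ (0,2) for i = 1,…,N, and let t₀ ≥ 3 be an integer. Let (δ_t)_{t≥t₀} be a sequence of nonnegative real numbers such that δ_{t+1} ≤ (1 − 2/t)·δ_t + Σ_{i=1}^{N} a_i / t^{p_i + 1} for all integers t ≥ t₀. Then for every integer t ≥ t₀: δ_t ≤ 2(t₀ − 1)·δ_{t₀}/t + Σ_{i=1}^{N} a_i / ((2 − p_i)·t^{p_i}). -/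
open MeasureTheory ProbabilityTheory Real
open scoped RealInnerProductSpace ENNReal NNReal BigOperators

noncomputable section

lemma rec_key (t q : ℝ) (ht : 0 < t) (hq : 0 < q) : 1 - q/t ≤ (t/(t+1))^q := by
  have h1 : (0:ℝ) < t/(t+1) := by positivity
  have hlog : Real.log (t+1) - Real.log t ≤ 1/t := by
    have h := Real.log_le_sub_one_of_pos (show (0:ℝ) < (t+1)/t by positivity)
    rw [Real.log_div (by linarith) ht.ne'] at h
    have : (t+1)/t - 1 = 1/t := by field_simp; ring
    linarith
  rw [Real.rpow_def_of_pos h1, Real.log_div ht.ne' (by linarith)]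
  have h2 : -(q/t) ≤ (Real.log t - Real.log (t+1)) * q := by
    have := mul_le_mul_of_nonneg_right hlog hq.le
    have h3 : 1/t * q = q/t := by ring
    nlinarith
  calc 1 - q/t = -(q/t) + 1 := by ring
    _ ≤ Real.exp (-(q/t)) := Real.add_one_le_exp _
    _ ≤ _ := Real.exp_le_exp.mpr h2

lemma rec_term_step (t a q : ℝ) (ht : 3 ≤ t) (ha : 0 ≤ a) (hq0 : 0 < q) (hq2 : q < 2) :
    (1 - 2/t) * (a/((2-q)*t^q)) + a/t^(q+1) ≤ a/((2-q)*(t+1)^q) := by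
  have ht0 : (0:ℝ) < t := by linarith
  have htp : 0 < t^q := Real.rpow_pos_of_pos ht0 q
  have ht1p : 0 < (t+1)^q := Real.rpow_pos_of_pos (by linarith) q
  have h2p : (0:ℝ) < 2 - q := by linarith
  have hk : 1 - q/t ≤ t^q/(t+1)^q := by
    have := rec_key t q ht0 hq0
    rwa [Real.div_rpow ht0.le (by linarith)] at this
  have hkey2 : (1 - q/t)/t^q ≤ 1/(t+1)^q := by
    rw [div_le_div_iff₀ htp ht1p]
    have := mul_le_mul_of_nonneg_right hk ht1p.le
    rw [div_mul_cancel₀ _ ht1p.ne'] at this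
    nlinarith
  have hpow : t^(q+1) = t^q * t := by
    rw [Real.rpow_add ht0, Real.rpow_one]
  have heq : (1 - 2/t) * (a/((2-q)*t^q)) + a/t^(q+1) = a/(2-q) * ((1 - q/t)/t^q) := by
    rw [hpow]; field_simp; ring
  have heq2 : a/((2-q)*(t+1)^q) = a/(2-q) * (1/(t+1)^q) := by
    field_simp
  rw [heq, heq2]
  exact mul_le_mul_of_nonneg_left hkey2 (by positivity)

/-- recursion lemma.
If `δ_{t+1} ≤ (1 − 2/t)δ_t + Σᵢ aᵢ/t^{pᵢ+1}` for all `t ≥ t₀ ≥ 3`, with `aᵢ ≥ 0`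
and `pᵢ ∈ (0,2)`, then `δ_t ≤ 2(t₀−1)δ_{t₀}/t + Σᵢ aᵢ/((2−pᵢ)t^{pᵢ})` for `t ≥ t₀`. -/
theorem recursion_lemma (N : ℕ) (hN : 1 ≤ N) (a p : ℕ → ℝ)
    (ha : ∀ i ∈ Finset.Icc 1 N, 0 ≤ a i)
    (hp : ∀ i ∈ Finset.Icc 1 N, p i ∈ Set.Ioo (0 : ℝ) 2)
    (t₀ : ℕ) (ht₀ : 3 ≤ t₀)
    (δ : ℕ → ℝ) (hδ : ∀ t, t₀ ≤ t → 0 ≤ δ t)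
    (hrec : ∀ t, t₀ ≤ t →
      δ (t + 1) ≤ (1 - 2 / (t : ℝ)) * δ t +
        ∑ i ∈ Finset.Icc 1 N, a i / (t : ℝ) ^ (p i + 1)) :
    ∀ t, t₀ ≤ t →
      δ t ≤ 2 * ((t₀ : ℝ) - 1) * δ t₀ / (t : ℝ) +
        ∑ i ∈ Finset.Icc 1 N, a i / ((2 - p i) * (t : ℝ) ^ (p i)) := by
  intro t ht
  induction t, ht using Nat.le_induction with
  | base =>
    have hδ0 := hδ t₀ le_rfl
    have ht3 : (3:ℝ) ≤ (t₀:ℝ) := by exact_mod_cast ht₀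
    have ht0pos : (0:ℝ) < (t₀:ℝ) := by linarith
    have hsum : 0 ≤ ∑ i ∈ Finset.Icc 1 N, a i / ((2 - p i) * (t₀ : ℝ) ^ (p i)) := by
      apply Finset.sum_nonneg
      intro i hi
      have hai := ha i hi
      obtain ⟨hp1, hp2⟩ := hp i hi
      have : (0:ℝ) < (t₀:ℝ) ^ (p i) := Real.rpow_pos_of_pos ht0pos _
      have : (0:ℝ) < 2 - p i := by linarith
      positivity
    have hbase : δ t₀ ≤ 2 * ((t₀ : ℝ) - 1) * δ t₀ / (t₀ : ℝ) := by
      rw [le_div_iff₀ ht0pos]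
      nlinarith
    linarith
  | succ t ht ih =>
    have hT3 : (3:ℝ) ≤ (t:ℝ) := by exact_mod_cast le_trans ht₀ ht
    have hT0 : (0:ℝ) < (t:ℝ) := by linarith
    have hfac : 0 ≤ 1 - 2/(t:ℝ) := by
      rw [sub_nonneg, div_le_one hT0]; linarith
    have h1 := hrec t ht
    have h2 := mul_le_mul_of_nonneg_left ih hfac
    have hδ0 := hδ t₀ le_rfl
    have hC : 0 ≤ 2 * ((t₀:ℝ) - 1) * δ t₀ := by
      have : (3:ℝ) ≤ (t₀:ℝ) := by exact_mod_cast ht₀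
      nlinarith
    have hB : (1 - 2/(t:ℝ)) * (2 * ((t₀:ℝ) - 1) * δ t₀ / (t:ℝ))
        ≤ 2 * ((t₀:ℝ) - 1) * δ t₀ / ((t:ℝ) + 1) := by
      rw [show (1 - 2/(t:ℝ)) * (2 * ((t₀:ℝ) - 1) * δ t₀ / (t:ℝ))
          = (2 * ((t₀:ℝ) - 1) * δ t₀ * ((t:ℝ) - 2))/((t:ℝ)*(t:ℝ)) by
        field_simp]
      rw [div_le_div_iff₀ (by positivity) (by linarith)]
      nlinarith
    have hS : (1 - 2/(t:ℝ)) * (∑ i ∈ Finset.Icc 1 N, a i / ((2 - p i) * (t:ℝ) ^ (p i)))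
        + ∑ i ∈ Finset.Icc 1 N, a i / (t : ℝ) ^ (p i + 1)
        ≤ ∑ i ∈ Finset.Icc 1 N, a i / ((2 - p i) * ((t:ℝ) + 1) ^ (p i)) := by
      rw [Finset.mul_sum, ← Finset.sum_add_distrib]
      apply Finset.sum_le_sum
      intro i hi
      exact rec_term_step (t:ℝ) (a i) (p i) hT3 (ha i hi) (hp i hi).1 (hp i hi).2
    push_cast
    calc δ (t + 1) ≤ (1 - 2 / (t : ℝ)) * δ t
          + ∑ i ∈ Finset.Icc 1 N, a i / (t : ℝ) ^ (p i + 1) := h1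
      _ ≤ (1 - 2/(t:ℝ)) * (2 * ((t₀ : ℝ) - 1) * δ t₀ / (t : ℝ)
          + ∑ i ∈ Finset.Icc 1 N, a i / ((2 - p i) * (t : ℝ) ^ (p i)))
          + ∑ i ∈ Finset.Icc 1 N, a i / (t : ℝ) ^ (p i + 1) := by linarith
      _ = (1 - 2/(t:ℝ)) * (2 * ((t₀ : ℝ) - 1) * δ t₀ / (t : ℝ))
          + ((1 - 2/(t:ℝ)) * (∑ i ∈ Finset.Icc 1 N, a i / ((2 - p i) * (t:ℝ) ^ (p i)))
          + ∑ i ∈ Finset.Icc 1 N, a i / (t : ℝ) ^ (p i + 1)) := by ring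
      _ ≤ 2 * ((t₀:ℝ) - 1) * δ t₀ / ((t:ℝ) + 1)
          + ∑ i ∈ Finset.Icc 1 N, a i / ((2 - p i) * ((t:ℝ) + 1) ^ (p i)) := by linarith
end
end
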